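/- arXiv:1210.3376 — 7 statements merged into one kernel-verified Lean document; each statement's English description precedes it below -/
import Mathlib

section
/- For every n ≥ 1, k ≥ 2 and every (k−1)-tuple σ = (σ_2,…,σ_k) of permutations of {1,…,n}, the Edelman–Jamison lattice E(σ) is isomorphic (as a lattice) to the π-coordinatized lattice C(σ^{-1}), where σ^{-1} denotes the (k−1)-tuple (σ_2^{-1},…,σ_k^{-1}). -/
/-- The initial segment `{σ(1), …, σ(j)}` of a permutation `σ` of `{1,…,n}`
(encoded on `Fin n`), as a finset; for `j = 0` this is `∅`. -/
def iniSeg {n : ℕ} (σ : Equiv.Perm (Fin n)) (j : ℕ) : Finset (Fin n) :=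
  (Finset.univ.filter fun m : Fin n => (m : ℕ) < j).image σ

/-- The Edelman–Jamison lattice `E(σ)`: the join-subsemilattice of the powerset of
`{1,…,n}` (ordered by inclusion, with join `∪`) generated by the initial segments
`{σ_i(1),…,σ_i(j)}`, `1 ≤ i ≤ k`, `0 ≤ j ≤ n`. -/
def EJ {n k : ℕ} (σ : Fin k → Equiv.Perm (Fin n)) : Set (Finset (Fin n)) :=
  supClosure {S | ∃ (i : Fin k) (j : ℕ), j ≤ n ∧ S = iniSeg (σ i) j}

/-- `π`-eligibility of a `k`-tuple `x ∈ {0,…,n}^k`: `π_{ij}(x_i + 1) ≥ x_j + 1` holds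
whenever `x_i < n`, where `π_{ij} = π_{1j} ∘ π_{1i}⁻¹` (a value `v ∈ {1,…,n}` is encoded
as the element `v - 1` of `Fin n`). -/
def Eligible {n k : ℕ} (π : Fin k → Equiv.Perm (Fin n)) (x : Fin k → ℕ) : Prop :=
  (∀ i, x i ≤ n) ∧
    ∀ (i j : Fin k) (h : x i < n), x j + 1 ≤ ((π j) ((π i)⁻¹ ⟨x i, h⟩) : ℕ) + 1

namespace EJProof

variable {n : ℕ}

lemma mem_iniSeg {σ : Equiv.Perm (Fin n)} {j : ℕ} {a : Fin n} :
    a ∈ iniSeg σ j ↔ ((σ⁻¹ a : Fin n) : ℕ) < j := by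
  simp only [iniSeg, Finset.mem_image, Finset.mem_filter, Finset.mem_univ, true_and]
  constructor
  · rintro ⟨m, hm, rfl⟩; simpa using hm
  · intro h; exact ⟨σ⁻¹ a, h, by simp⟩

lemma iniSeg_mono (σ : Equiv.Perm (Fin n)) {j j' : ℕ} (h : j ≤ j') :
    iniSeg σ j ⊆ iniSeg σ j' := by
  intro a ha
  rw [mem_iniSeg] at ha ⊢
  omega

lemma iniSeg_zero (σ : Equiv.Perm (Fin n)) : iniSeg σ 0 = ∅ := by
  ext a; simp [mem_iniSeg]

/-- The largest `j ≤ n` such that `iniSeg σ j ⊆ S`. -/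
def F (σ : Equiv.Perm (Fin n)) (S : Finset (Fin n)) : ℕ :=
  Nat.findGreatest (fun j => iniSeg σ j ⊆ S) n

lemma F_le (σ : Equiv.Perm (Fin n)) (S : Finset (Fin n)) : F σ S ≤ n :=
  Nat.findGreatest_le n

lemma iniSeg_F_subset (σ : Equiv.Perm (Fin n)) (S : Finset (Fin n)) :
    iniSeg σ (F σ S) ⊆ S :=
  Nat.findGreatest_spec (P := fun j => iniSeg σ j ⊆ S) (Nat.zero_le n)
    (by show iniSeg σ 0 ⊆ S; rw [iniSeg_zero]; exact Finset.empty_subset S)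

lemma le_F {σ : Equiv.Perm (Fin n)} {S : Finset (Fin n)} {j : ℕ} (hj : j ≤ n)
    (h : iniSeg σ j ⊆ S) : j ≤ F σ S :=
  Nat.le_findGreatest hj h

lemma next_not_mem {σ : Equiv.Perm (Fin n)} {S : Finset (Fin n)} (h : F σ S < n) :
    σ ⟨F σ S, h⟩ ∉ S := by
  intro hmem
  have hsub : iniSeg σ (F σ S + 1) ⊆ S := by
    intro a ha
    rw [mem_iniSeg] at ha
    rcases Nat.lt_succ_iff_lt_or_eq.mp ha with h' | h'
    · exact iniSeg_F_subset σ S (mem_iniSeg.mpr h')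
    · have : a = σ ⟨F σ S, h⟩ := by
        have : σ⁻¹ a = ⟨F σ S, h⟩ := Fin.ext h'
        rw [← this]; simp
      rw [this]; exact hmem
  have := le_F h hsub
  omega

lemma F_mono (σ : Equiv.Perm (Fin n)) {S T : Finset (Fin n)} (h : S ⊆ T) :
    F σ S ≤ F σ T :=
  le_F (F_le σ S) ((iniSeg_F_subset σ S).trans h)

variable {k : ℕ} (σ : Fin k → Equiv.Perm (Fin n))

/-- The union of the initial segments prescribed by `x`. -/
def U [NeZero k] (x : Fin k → ℕ) : Finset (Fin n) :=
  Finset.univ.sup' Finset.univ_nonempty fun i => iniSeg (σ i) (x i)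

lemma iniSeg_subset_U [NeZero k] (x : Fin k → ℕ) (i : Fin k) :
    iniSeg (σ i) (x i) ⊆ U σ x :=
  Finset.le_sup' (f := fun i => iniSeg (σ i) (x i)) (Finset.mem_univ i)

lemma mem_U_iff [NeZero k] {x : Fin k → ℕ} {a : Fin n} :
    a ∈ U σ x ↔ ∃ i, a ∈ iniSeg (σ i) (x i) := by
  simp [U, Finset.mem_sup']

lemma U_mono [NeZero k] {x y : Fin k → ℕ} (h : ∀ i, x i ≤ y i) : U σ x ⊆ U σ y := by
  intro a ha
  rw [mem_U_iff] at ha ⊢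
  obtain ⟨i, hi⟩ := ha
  exact ⟨i, iniSeg_mono _ (h i) hi⟩

lemma U_mem_EJ [NeZero k] {x : Fin k → ℕ} (hx : ∀ i, x i ≤ n) : U σ x ∈ EJ σ :=
  finsetSup'_mem_supClosure _ fun i _ => ⟨i, x i, hx i, rfl⟩

/-- Eligibility (with `π = σ⁻¹`) rewritten. -/
lemma eligible_iff (x : Fin k → ℕ) :
    Eligible (fun i => (σ i)⁻¹) x ↔
      (∀ i, x i ≤ n) ∧ ∀ (i j : Fin k) (h : x i < n),
        x j ≤ (((σ j)⁻¹ (σ i ⟨x i, h⟩) : Fin n) : ℕ) := by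
  unfold Eligible
  simp only [Inv.inv]
  constructor
  · rintro ⟨h1, h2⟩
    refine ⟨h1, fun i j h => ?_⟩
    have := h2 i j h
    simp only [Equiv.Perm.inv_def, Equiv.symm_symm] at this ⊢
    omega
  · rintro ⟨h1, h2⟩
    refine ⟨h1, fun i j h => ?_⟩
    have := h2 i j h
    simp only [Equiv.Perm.inv_def, Equiv.symm_symm] at this ⊢
    omega

lemma F_eligible (S : Finset (Fin n)) :
    Eligible (fun i => (σ i)⁻¹) (fun i => F (σ i) S) := by
  rw [eligible_iff]
  refine ⟨fun i => F_le _ _, fun i j h => ?_⟩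
  by_contra hcon
  push_neg at hcon
  have hmem : σ i ⟨F (σ i) S, h⟩ ∈ iniSeg (σ j) (F (σ j) S) := by
    rw [mem_iniSeg]; exact hcon
  exact next_not_mem h (iniSeg_F_subset (σ j) S hmem)

lemma F_U [NeZero k] {x : Fin k → ℕ} (hx : Eligible (fun i => (σ i)⁻¹) x) (i : Fin k) :
    F (σ i) (U σ x) = x i := by
  rw [eligible_iff] at hx
  obtain ⟨h1, h2⟩ := hx
  refine le_antisymm ?_ (le_F (h1 i) (iniSeg_subset_U σ x i))
  by_contra hcon
  push_neg at hcon
  have hxi : x i < n := lt_of_lt_of_le hcon (F_le _ _)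
  have hmem : σ i ⟨x i, hxi⟩ ∈ U σ x := by
    apply iniSeg_F_subset (σ i) (U σ x)
    rw [mem_iniSeg]
    simpa using hcon
  rw [mem_U_iff] at hmem
  obtain ⟨j, hj⟩ := hmem
  rw [mem_iniSeg] at hj
  have := h2 i j hxi
  omega

set_option maxHeartbeats 1000000 in
lemma U_F [NeZero k] {S : Finset (Fin n)} (hS : S ∈ EJ σ) :
    U σ (fun i => F (σ i) S) = S := by
  apply Finset.Subset.antisymm
  · intro a ha
    rw [mem_U_iff] at ha
    obtain ⟨i, hi⟩ := ha
    exact iniSeg_F_subset (σ i) S hi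
  · -- show `S ⊆ U σ (F · S)` by supClosure induction
    have key : EJ σ ⊆ {T : Finset (Fin n) | T ⊆ U σ (fun i => F (σ i) T)} := by
      apply supClosure_min
      · rintro T ⟨i, j, hj, rfl⟩
        have hle : j ≤ F (σ i) (iniSeg (σ i) j) := le_F hj (subset_refl _)
        exact (iniSeg_mono _ hle).trans (iniSeg_subset_U σ (fun i' => F (σ i') (iniSeg (σ i) j)) i)
      · intro A hA B hB
        have hAB : A ⊔ B ⊆ U σ (fun i => F (σ i) (A ⊔ B)) := by
          have hA' : A ⊆ U σ (fun i => F (σ i) (A ⊔ B)) :=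
            hA.trans (U_mono σ fun i => F_mono _ le_sup_left)
          have hB' : B ⊆ U σ (fun i => F (σ i) (A ⊔ B)) :=
            hB.trans (U_mono σ fun i => F_mono _ le_sup_right)
          exact sup_le hA' hB'
        exact hAB
    exact key hS

end EJProof

/-- For every `n ≥ 1`, `k ≥ 2` and every `(k-1)`-tuple
`σ = (σ_2,…,σ_k)` of permutations of `{1,…,n}` (encoded as `σ : Fin k → Equiv.Perm (Fin n)`
with `σ 0 = id` playing the role of `σ_1`), the Edelman–Jamison lattice `E(σ)` is
order-isomorphic (equivalently, isomorphic as a lattice) to the `π`-coordinatized lattice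
`C(σ⁻¹)`, where `σ⁻¹ = (σ_2⁻¹,…,σ_k⁻¹)`. -/
theorem statement0 (n k : ℕ) (hn : 1 ≤ n) (hk : 2 ≤ k)
    (σ : Fin k → Equiv.Perm (Fin n)) (hσ : σ ⟨0, by omega⟩ = 1) :
    Nonempty ((EJ σ) ≃o {x : Fin k → ℕ // Eligible (fun i => (σ i)⁻¹) x}) := by
  haveI : NeZero k := ⟨by omega⟩
  refine ⟨{ toFun := fun S => ⟨fun i => EJProof.F (σ i) S.1, EJProof.F_eligible σ S.1⟩
            invFun := fun x => ⟨EJProof.U σ x.1, EJProof.U_mem_EJ σ x.2.1⟩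
            left_inv := ?_
            right_inv := ?_
            map_rel_iff' := ?_ }⟩
  · rintro ⟨S, hS⟩
    exact Subtype.ext (EJProof.U_F σ hS)
  · rintro ⟨x, hx⟩
    exact Subtype.ext (funext fun i => EJProof.F_U σ hx i)
  · rintro ⟨S, hS⟩ ⟨T, hT⟩
    constructor
    · intro h
      have := EJProof.U_mono σ (x := fun i => EJProof.F (σ i) S) (y := fun i => EJProof.F (σ i) T) h
      rw [EJProof.U_F σ hS, EJProof.U_F σ hT] at this
      exact this
    · intro h i
      exact EJProof.F_mono (σ i) h
end

section
/- For every n ≥ 1, k ≥ 2 and every (k−1)-tuple σ = (σ_2,…,σ_k) of permutations of {1,…,n}, the Edelman–Jamison lattice E(σ) is a join-distributive lattice of length n whose join-width is at most k. -/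
/-- Order-theoretic join-irreducibility: `a` is not minimal, and whenever `a` is the
least upper bound (join) of `b` and `c`, it equals `b` or `c`. -/
def SupIrredOrd {α : Type*} [PartialOrder α] (a : α) : Prop :=
  ¬IsMin a ∧ ∀ b c : α, IsLUB {b, c} a → a = b ∨ a = c

/-- Order-theoretic join-distributivity: for every non-maximal `x`, writing `u` for the
join `x*` of the upper covers of `x`, the interval `[x, u]` is a distributive lattice;
joins and meets are expressed via `IsLUB`/`IsGLB`. -/
def JoinDistributiveOrd (α : Type*) [PartialOrder α] : Prop :=
  ∀ x u : α, ¬IsMax x → IsLUB {y | x ⋖ y} u →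
    ∀ a ∈ Set.Icc x u, ∀ b ∈ Set.Icc x u, ∀ c ∈ Set.Icc x u,
      ∀ bc abc ab ac s : α,
        IsLUB {b, c} bc → IsGLB {a, bc} abc →
        IsGLB {a, b} ab → IsGLB {a, c} ac → IsLUB {ab, ac} s →
        abc = s

/-!
A set lies in `E(σ)` iff each of its elements is preceded, in one of the orders `σ i`, only by
elements of the set. These feasible sets are closed under union, contain `∅` and satisfy the
antimatroid exchange property. Hence joins are unions, meets exist by finiteness, and every
upper cover of `x` is `x` plus one element `a` with `x ∪ {a}` feasible. So `x*` lies inside the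
set of such `a`, every set between `x` and `x*` is feasible, and `[x, x*]` is Boolean.
Strict chains grow in cardinality and the `σ 0`-initial segments form a chain of length `n`.
A join-irreducible element is one of the generating initial segments; the segments of a fixed
`σ i` form a chain, so an antichain of join-irreducibles meets each of the `k` chains at most once.
-/

section Subtype

variable {α : Type*}

lemma isLUB_pair_mk_sup [SemilatticeSup α] {S : Set α} (a b : S) (h : a.1 ⊔ b.1 ∈ S) :
    IsLUB {a, b} (⟨a.1 ⊔ b.1, h⟩ : S) := by
  refine ⟨?_, fun c hc => sup_le (hc (by simp)) (hc (by simp))⟩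
  rintro _ (rfl | rfl)
  exacts [le_sup_left (b := b.1), le_sup_right (a := a.1)]

lemma isGLB_pair_mk_inf [Lattice α] {S : Set α} (a b : S) (h : a.1 ⊓ b.1 ∈ S) :
    IsGLB {a, b} (⟨a.1 ⊓ b.1, h⟩ : S) := by
  refine ⟨?_, fun c hc => le_inf (hc (by simp)) (hc (by simp))⟩
  rintro _ (rfl | rfl)
  exacts [inf_le_left (b := b.1), inf_le_right (a := a.1)]

lemma SupClosed.exists_isGLB_pair [SemilatticeSup α] [OrderBot α] {S : Set α}
    (hS : SupClosed S) (hfin : S.Finite) (hbot : ⊥ ∈ S) (a b : S) : ∃ t : S, IsGLB {a, b} t := by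
  set L := {c | c ∈ S ∧ c ≤ a.1 ∧ c ≤ b.1}
  have hL : L.Finite := hfin.subset fun c hc => hc.1
  have hmem : hL.toFinset.sup id ∈ S :=
    Finset.sup_induction hbot (fun _ h₁ _ h₂ => hS h₁ h₂) fun c hc => (hL.mem_toFinset.1 hc).1
  refine ⟨⟨_, hmem⟩, ?_, fun c hc => Finset.le_sup (f := id) (hL.mem_toFinset.2 ?_)⟩
  · rintro _ (rfl | rfl)
    exacts [Finset.sup_le fun c hc => (hL.mem_toFinset.1 hc).2.1,
      Finset.sup_le fun c hc => (hL.mem_toFinset.1 hc).2.2]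
  · exact ⟨c.2, hc (by simp), hc (by simp)⟩

lemma SupIrredOrd.mem_of_mem_supClosure [SemilatticeSup α] {s : Set α} {a : supClosure s}
    (ha : SupIrredOrd a) : a.1 ∈ s := by
  set T := {x | ∃ hx : x ∈ supClosure s, SupIrredOrd (⟨x, hx⟩ : supClosure s) → x ∈ s}
  have hT : SupClosed T := by
    rintro x ⟨hx, hxs⟩ y ⟨hy, hys⟩
    refine ⟨supClosed_supClosure hx hy, fun hirr => ?_⟩
    rcases hirr.2 ⟨x, hx⟩ ⟨y, hy⟩ (isLUB_pair_mk_sup ⟨x, hx⟩ ⟨y, hy⟩ _) with h | h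
    · rw [h] at hirr
      rw [show x ⊔ y = x from congrArg Subtype.val h]
      exact hxs hirr
    · rw [h] at hirr
      rw [show x ⊔ y = y from congrArg Subtype.val h]
      exact hys hirr
  have hsT : s ⊆ T := fun x hx => ⟨subset_supClosure hx, fun _ => hx⟩
  obtain ⟨_, has⟩ := supClosure_min hsT hT a.2
  exact has ha

lemma eq_of_isGLB_isLUB_of_Icc_subset [DistribLattice α] {S : Set α} {x u : S}
    (hS : Set.Icc x.1 u.1 ⊆ S) {a b c : S} (ha : a ∈ Set.Icc x u) (hb : b ∈ Set.Icc x u)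
    (hc : c ∈ Set.Icc x u) {bc abc ab ac s : S} (hbc : IsLUB {b, c} bc)
    (habc : IsGLB {a, bc} abc) (hab : IsGLB {a, b} ab) (hac : IsGLB {a, c} ac)
    (hs : IsLUB {ab, ac} s) : abc = s := by
  have sup_mem {p q : S} (hp : p ∈ Set.Icc x u) (hq : q ∈ Set.Icc x u) : p.1 ⊔ q.1 ∈ S :=
    hS ⟨le_sup_of_le_left hp.1, sup_le hp.2 hq.2⟩
  have inf_mem {p q : S} (hp : p ∈ Set.Icc x u) (hq : q ∈ Set.Icc x u) : p.1 ⊓ q.1 ∈ S :=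
    hS ⟨le_inf hp.1 hq.1, inf_le_of_left_le hp.2⟩
  obtain rfl := hbc.unique (isLUB_pair_mk_sup b c (sup_mem hb hc))
  have hbc_mem : (⟨b.1 ⊔ c.1, sup_mem hb hc⟩ : S) ∈ Set.Icc x u :=
    ⟨le_sup_of_le_left hb.1, sup_le hb.2 hc.2⟩
  obtain rfl := habc.unique (isGLB_pair_mk_inf a _ (inf_mem ha hbc_mem))
  obtain rfl := hab.unique (isGLB_pair_mk_inf a b (inf_mem ha hb))
  obtain rfl := hac.unique (isGLB_pair_mk_inf a c (inf_mem ha hc))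
  have hmem : (a.1 ⊓ b.1) ⊔ (a.1 ⊓ c.1) ∈ S := inf_sup_left a.1 b.1 c.1 ▸ inf_mem ha hbc_mem
  obtain rfl := hs.unique (isLUB_pair_mk_sup _ _ hmem)
  exact Subtype.ext (inf_sup_left a.1 b.1 c.1)

end Subtype

theorem IsAntichain.card_le_of_subset_iUnion_isChain {α ι : Type*} [Fintype ι]
    {r : α → α → Prop} {A : Finset α} (hA : IsAntichain r (A : Set α)) {C : ι → Set α}
    (hC : ∀ i, IsChain r (C i)) (hAC : (A : Set α) ⊆ ⋃ i, C i) : A.card ≤ Fintype.card ι := by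
  choose f hf using fun a : A => Set.mem_iUnion.1 (hAC a.2)
  have hf_inj : Function.Injective f := fun a b hab =>
    Subtype.ext <| inter_subsingleton_of_isChain_of_isAntichain (hC (f a)) hA
      ⟨hf a, a.2⟩ ⟨hab ▸ hf b, b.2⟩
  simpa using Fintype.card_le_of_injective f hf_inj

theorem krullDim_le_card {α : Type*} [Fintype α] (S : Set (Finset α)) :
    Order.krullDim S ≤ Fintype.card α := by
  have hf : StrictMono fun A : S =>
      (⟨A.1.card, Nat.lt_succ_of_le (Finset.card_le_univ _)⟩ : Fin (Fintype.card α + 1)) :=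
    fun _ _ h => Finset.card_lt_card h
  refine ENat.WithBot.lt_add_one_iff.1 ?_
  exact_mod_cast Order.krullDim_lt_coe_iff.2 fun l => by simpa using (l.map _ hf).length_lt_card

section InitialSegments

variable {n : ℕ} {τ : Equiv.Perm (Fin n)}

lemma mem_iniSeg {j : ℕ} {b : Fin n} : b ∈ iniSeg τ j ↔ (τ.symm b : ℕ) < j := by
  simp [iniSeg, ← Equiv.eq_symm_apply]

lemma iniSeg_zero : iniSeg τ 0 = ∅ := by
  ext b
  simp [mem_iniSeg]

lemma iniSeg_mono : Monotone (iniSeg τ) :=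
  fun _ _ hj _ hb => mem_iniSeg.2 (lt_of_lt_of_le (mem_iniSeg.1 hb) hj)

lemma strictMono_iniSeg_fin : StrictMono fun j : Fin (n + 1) => iniSeg τ j := by
  refine fun j j' hjj' => Finset.ssubset_iff_subset_ne.2 ⟨iniSeg_mono hjj'.le, fun h => ?_⟩
  replace h : iniSeg τ j = iniSeg τ j' := h
  have hj : (j : ℕ) < n := lt_of_lt_of_le hjj' (Nat.lt_succ_iff.1 j'.2)
  have hmem : τ ⟨j, hj⟩ ∈ iniSeg τ j' := mem_iniSeg.2 (by simpa using hjj')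
  rw [← h, mem_iniSeg] at hmem
  simp at hmem

end InitialSegments

namespace EJ

variable {n k : ℕ} {σ : Fin k → Equiv.Perm (Fin n)}

variable (σ) in
def Feasible (A : Finset (Fin n)) : Prop :=
  ∀ b ∈ A, ∃ i, ∀ c, (σ i).symm c ≤ (σ i).symm b → c ∈ A

lemma feasible_iniSeg (i : Fin k) (j : ℕ) : Feasible σ (iniSeg (σ i) j) :=
  fun _ hb => ⟨i, fun _ hc => mem_iniSeg.2 (lt_of_le_of_lt hc (mem_iniSeg.1 hb))⟩

lemma supClosed_feasible : SupClosed {A | Feasible σ A} := by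
  intro A hA B hB b hb
  rcases Finset.mem_union.1 hb with hbA | hbB
  · obtain ⟨i, hi⟩ := hA b hbA
    exact ⟨i, fun c hc => Finset.mem_union_left _ (hi c hc)⟩
  · obtain ⟨i, hi⟩ := hB b hbB
    exact ⟨i, fun c hc => Finset.mem_union_right _ (hi c hc)⟩

lemma feasible_of_forall_feasible_insert {x p : Finset (Fin n)} (hxp : x ⊆ p)
    (hp : ∀ a ∈ p, Feasible σ (insert a x)) : Feasible σ p := by
  intro b hb
  obtain ⟨i, hi⟩ := hp b hb b (Finset.mem_insert_self b x)
  exact ⟨i, fun c hc => Finset.insert_subset hb hxp (hi c hc)⟩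

lemma Feasible.exists_feasible_insert {x y : Finset (Fin n)} (hx : Feasible σ x)
    (hy : Feasible σ y) (hxy : x ⊂ y) : ∃ a ∈ y, a ∉ x ∧ Feasible σ (insert a x) := by
  obtain ⟨b, hby, hbx⟩ := Finset.exists_of_ssubset hxy
  obtain ⟨i, hi⟩ := hy b hby
  -- `a` is the first element outside `x` in the order `σ i`; everything before it lies in `x`.
  obtain ⟨a, ha, hmin⟩ := (Finset.univ.filter fun c => (σ i).symm c ≤ (σ i).symm b ∧ c ∉ x)
    |>.exists_min_image (σ i).symm ⟨b, by simp [hbx]⟩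
  simp only [Finset.mem_filter, Finset.mem_univ, true_and] at ha hmin
  refine ⟨a, hi a ha.1, ha.2, fun c hc => ?_⟩
  obtain rfl | hcx := Finset.mem_insert.1 hc
  · refine ⟨i, fun d hd => ?_⟩
    by_contra hd'
    rw [Finset.mem_insert, not_or] at hd'
    exact hd'.1 ((σ i).symm.injective
      (le_antisymm hd (hmin d ⟨hd.trans ha.1, hd'.2⟩)))
  · obtain ⟨j, hj⟩ := hx c hcx
    exact ⟨j, fun d hd => Finset.mem_insert_of_mem (hj d hd)⟩

lemma iniSeg_mem_EJ (i : Fin k) {j : ℕ} (hj : j ≤ n) : iniSeg (σ i) j ∈ EJ σ :=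
  subset_supClosure ⟨i, j, hj, rfl⟩

lemma empty_mem_EJ (hk : 0 < k) : ∅ ∈ EJ σ :=
  iniSeg_zero (τ := σ ⟨0, hk⟩) ▸ iniSeg_mem_EJ _ (Nat.zero_le n)

lemma mem_EJ_iff (hk : 0 < k) {A : Finset (Fin n)} : A ∈ EJ σ ↔ Feasible σ A := by
  refine ⟨fun hA => supClosure_min ?_ supClosed_feasible hA, fun hA => ?_⟩
  · rintro _ ⟨i, j, -, rfl⟩
    exact feasible_iniSeg i j
  have hA_eq : A = (Finset.univ.filter fun p : Fin k × Fin (n + 1) => iniSeg (σ p.1) p.2 ⊆ A).sup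
      fun p => iniSeg (σ p.1) p.2 := by
    refine le_antisymm (fun b hb => ?_) (Finset.sup_le fun p hp => (Finset.mem_filter.1 hp).2)
    obtain ⟨i, hi⟩ := hA b hb
    refine Finset.mem_sup.2 ⟨(i, ⟨(σ i).symm b + 1, by omega⟩), ?_, mem_iniSeg.2 (by simp)⟩
    refine Finset.mem_filter.2 ⟨Finset.mem_univ _, fun c hc => hi c ?_⟩
    rw [mem_iniSeg] at hc
    exact Fin.le_iff_val_le_val.2 (Nat.lt_succ_iff.1 hc)
  rw [hA_eq]
  exact Finset.sup_induction (empty_mem_EJ hk) (fun _ h₁ _ h₂ => supClosed_supClosure h₁ h₂)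
    fun p _ => iniSeg_mem_EJ p.1 (Nat.lt_succ_iff.1 p.2.2)

variable (σ) in
open scoped Classical in
noncomputable def extensions (x : Finset (Fin n)) : Finset (Fin n) :=
  Finset.univ.filter fun a => Feasible σ (insert a x)

lemma mem_extensions {x : Finset (Fin n)} {a : Fin n} :
    a ∈ extensions σ x ↔ Feasible σ (insert a x) := by
  simp [extensions]

lemma Feasible.subset_extensions {x : Finset (Fin n)} (hx : Feasible σ x) :
    x ⊆ extensions σ x :=
  fun a ha => mem_extensions.2 (by rwa [Finset.insert_eq_of_mem ha])

lemma Feasible.feasible_extensions {x : Finset (Fin n)} (hx : Feasible σ x) :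
    Feasible σ (extensions σ x) :=
  feasible_of_forall_feasible_insert hx.subset_extensions fun _ ha => mem_extensions.1 ha

lemma subset_extensions_of_covBy (hk : 0 < k) {x y : EJ σ} (hxy : x ⋖ y) :
    y.1 ⊆ extensions σ x.1 := by
  have hx := (mem_EJ_iff hk).1 x.2
  obtain ⟨a, hay, hax, ha⟩ := hx.exists_feasible_insert ((mem_EJ_iff hk).1 y.2) hxy.1
  let z : EJ σ := ⟨insert a x.1, (mem_EJ_iff hk).2 ha⟩
  have hzy : z = y := (hxy.eq_or_eq (Finset.subset_insert a x.1)
    (Finset.insert_subset hay hxy.1.le)).resolve_left fun h => hax (h ▸ Finset.mem_insert_self a x.1)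
  rw [← hzy]
  exact Finset.insert_subset (mem_extensions.2 ha) hx.subset_extensions

lemma exists_isLUB_pair (a b : EJ σ) : ∃ s, IsLUB {a, b} s :=
  ⟨_, isLUB_pair_mk_sup a b (supClosed_supClosure a.2 b.2)⟩

lemma exists_isGLB_pair (hk : 0 < k) (a b : EJ σ) : ∃ t, IsGLB {a, b} t :=
  supClosed_supClosure.exists_isGLB_pair (Set.toFinite _) (empty_mem_EJ hk) a b

lemma joinDistributiveOrd (hk : 0 < k) : JoinDistributiveOrd (EJ σ) := by
  intro x u _ hu
  have hx := (mem_EJ_iff hk).1 x.2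
  let x' : EJ σ := ⟨extensions σ x.1, (mem_EJ_iff hk).2 hx.feasible_extensions⟩
  have hux' : u ≤ x' := hu.2 fun _ hy => subset_extensions_of_covBy hk hy
  refine fun a ha b hb c hc _ _ _ _ _ =>
    eq_of_isGLB_isLUB_of_Icc_subset (fun p hp => ?_) ha hb hc
  exact (mem_EJ_iff hk).2 <| feasible_of_forall_feasible_insert hp.1
    fun a ha => mem_extensions.1 (hux' (hp.2 ha))

lemma krullDim_eq (hk : 0 < k) : Order.krullDim (EJ σ) = n := by
  refine le_antisymm (by simpa using krullDim_le_card (EJ σ)) ?_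
  let chain : LTSeries (EJ σ) := .mk n
    (fun j => ⟨iniSeg (σ ⟨0, hk⟩) j, iniSeg_mem_EJ _ (Nat.lt_succ_iff.1 j.2)⟩)
    fun _ _ h => strictMono_iniSeg_fin h
  exact Order.LTSeries.length_le_krullDim chain

lemma card_le_of_isAntichain {A : Finset (EJ σ)} (hA : IsAntichain (· ≤ ·) (A : Set (EJ σ)))
    (hirr : ∀ a ∈ A, SupIrredOrd a) : A.card ≤ k := by
  let C : Fin k → Set (EJ σ) := fun i => {a | ∃ j, a.1 = iniSeg (σ i) j}
  have hC : ∀ i, IsChain (· ≤ ·) (C i) := by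
    rintro i a ⟨j, hj⟩ b ⟨j', hj'⟩ -
    rcases le_total j j' with h | h
    · exact Or.inl (show a.1 ⊆ b.1 by rw [hj, hj']; exact iniSeg_mono h)
    · exact Or.inr (show b.1 ⊆ a.1 by rw [hj, hj']; exact iniSeg_mono h)
  have hAC : (A : Set (EJ σ)) ⊆ ⋃ i, C i := fun a ha => by
    obtain ⟨i, j, -, hj⟩ := (hirr a ha).mem_of_mem_supClosure
    exact Set.mem_iUnion.2 ⟨i, j, hj⟩
  simpa using hA.card_le_of_subset_iUnion_isChain hC hAC

end EJ

/-- For every `n ≥ 1`, `k ≥ 2` and every `(k-1)`-tuple `σ = (σ_2,…,σ_k)`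
of permutations of `{1,…,n}` (encoded with `σ 0 = id` playing the role of `σ_1`), the
Edelman–Jamison poset `E(σ)` (ordered by inclusion) is a lattice, it is join-distributive,
its length is `n`, and its join-width is at most `k` (every antichain of join-irreducible
elements has at most `k` elements). -/
theorem statement4 (n k : ℕ) (hk : 2 ≤ k)
    (σ : Fin k → Equiv.Perm (Fin n)) :
    (∀ a b : EJ σ, (∃ s, IsLUB {a, b} s) ∧ (∃ t, IsGLB {a, b} t)) ∧
    JoinDistributiveOrd (EJ σ) ∧
    Order.krullDim (EJ σ) = n ∧
    ∀ A : Finset (EJ σ), IsAntichain (· ≤ ·) (A : Set (EJ σ)) →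
      (∀ a ∈ A, SupIrredOrd a) → A.card ≤ k := by
  have hk₀ : 0 < k := by omega
  exact ⟨fun a b => ⟨EJ.exists_isLUB_pair a b, EJ.exists_isGLB_pair hk₀ a b⟩,
    EJ.joinDistributiveOrd hk₀, EJ.krullDim_eq hk₀, fun _ => EJ.card_le_of_isAntichain⟩
end

section
/- Every join-distributive lattice of length n and join-width at most k (with n ≥ 1, k ≥ 2) is isomorphic to the π-coordinatized lattice C(π) for some (k−1)-tuple π = (π_{12},…,π_{1k}) of permutations of {1,…,n}. -/
/-- A lattice is join-distributive if for every non-maximal `x`, the interval `[x, x*]`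
is distributive, where `x*` is the join (least upper bound) of the upper covers of `x`. -/
def JoinDistributive (α : Type*) [Lattice α] : Prop :=
  ∀ x u : α, ¬IsMax x → IsLUB {y | x ⋖ y} u →
    ∀ a ∈ Set.Icc x u, ∀ b ∈ Set.Icc x u, ∀ c ∈ Set.Icc x u,
      a ⊓ (b ⊔ c) = (a ⊓ b) ⊔ (a ⊓ c)

/-!
In a finite join-distributive lattice every cover `a ⋖ b` has a label: the largest element above
`a` but not above `b`. It exists because join-distributivity makes the lattice semimodular and
then forces any two maximal candidates to coincide. Every label occurs exactly once along every
maximal chain, so all maximal chains have the same length `n` (the Krull dimension) and list the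
same `n` labels, in orders that differ by permutations. By Dilworth's theorem `k` maximal chains
pass through all join-irreducibles, so every `x` is the join of the elements `c_i (x_i)`, where
`x_i` is the last position of chain `i` below `x`. Hence `x ↦ (x_i)_i` is an order embedding;
its image is the set of tuples with `c_j (x_j)` below the label of step `x_i` of chain `i` for
all `i, j`, and translating labels of chain `i` into positions on chain `j` through the
permutations turns this into `π`-eligibility.
-/

open Set Function

section Dilworth

variable {β : Type*} [PartialOrder β] [Finite β]

/-- Dilworth's theorem. -/
theorem exists_chain_coloring_of_antichain_card_le {k : ℕ}
    (hwidth : ∀ A : Finset β, IsAntichain (· ≤ ·) (A : Set β) → A.card ≤ k) :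
    ∃ col : β → Fin k, ∀ i, IsChain (· ≤ ·) (col ⁻¹' {i}) := by
  classical
  have := Fintype.ofFinite β
  -- Hall's theorem matches every `x` injectively with an element above it or one of `k` colours.
  obtain ⟨f, hf, hfx⟩ := (Fintype.all_card_le_filter_rel_iff_exists_injective
    (fun (x : β) (y : β ⊕ Fin k) => y.elim (x < ·) fun _ => True)).1 fun A => by
      rcases A.eq_empty_or_nonempty with rfl | ⟨a, ha⟩
      · simp
      let N := Finset.univ.filter fun y => ∃ a ∈ A, a < y
      have hanti : IsAntichain (· ≤ ·) ((A \ N : Finset β) : Set β) := fun x hx y hy hxy hle => by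
        simp only [Finset.coe_sdiff, Set.mem_sdiff, Finset.mem_coe, N, Finset.mem_filter] at hx hy
        exact hy.2 ⟨Finset.mem_univ y, x, hx.1, lt_of_le_of_ne hle hxy⟩
      calc A.card ≤ (A \ N).card + N.card := Finset.card_le_card_sdiff_add_card
        _ ≤ (N.disjSum Finset.univ).card := by
          rw [Finset.card_disjSum, Finset.card_univ, Fintype.card_fin, add_comm]
          exact Nat.add_le_add_left (hwidth _ hanti) _
        _ ≤ _ := Finset.card_le_card fun y hy => by
          rcases y with y | d
          · simpa [N] using hy
          · simpa using ⟨a, ha⟩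
  -- Following the matching upwards from `x` ends at a colour; by injectivity, the paths ending
  -- at the same colour form a single chain.
  let R : β → β → Prop := fun x y => f x = .inl y
  have hRlt : ∀ {x y}, R x y → x < y := fun {x y} h => by simpa [R, h] using hfx x
  have hRle : ∀ {x y}, Relation.ReflTransGen R x y → x ≤ y := fun h => by
    induction h with
    | refl => exact le_rfl
    | tail _ hyz ih => exact ih.trans (hRlt hyz).le
  have hend : ∀ x, ∃ e d, Relation.ReflTransGen R x e ∧ f e = .inr d := fun x => by
    induction x using WellFoundedGT.induction with
    | ind x ih =>
      rcases hfxe : f x with y | d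
      · obtain ⟨e, d, hye, hed⟩ := ih y (hRlt hfxe)
        exact ⟨e, d, .head hfxe hye, hed⟩
      · exact ⟨x, d, .refl, hfxe⟩
  choose e col hxe hcol using hend
  refine ⟨col, fun i x hx y hy _ => ?_⟩
  have hxy : col x = col y := hx.trans hy.symm
  have he : e x = e y := hf (by rw [hcol, hcol, hxy])
  have hunique : Relator.RightUnique (swap R) := fun _ _ _ h₁ h₂ => hf (h₁.trans h₂.symm)
  rcases Relation.ReflTransGen.total_of_right_unique hunique
    (Relation.reflTransGen_swap.2 (hxe x)) (Relation.reflTransGen_swap.2 (he ▸ hxe y))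
    with h | h
  · exact .inr (hRle (Relation.reflTransGen_swap.1 h))
  · exact .inl (hRle (Relation.reflTransGen_swap.1 h))

end Dilworth

structure IsCoverChain {α : Type*} [Preorder α] (c : ℕ → α) (p : ℕ) (a b : α) : Prop where
  apply_zero : c 0 = a
  apply_length : c p = b
  covBy : ∀ t < p, c t ⋖ c (t + 1)

namespace IsCoverChain

variable {α : Type*} [PartialOrder α] {c : ℕ → α} {p : ℕ} {a b : α}

theorem cons {a' : α} (h : a ⋖ a') (hc : IsCoverChain c p a' b) :
    IsCoverChain (fun r => if r = 0 then a else c (r - 1)) (p + 1) a b where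
  apply_zero := rfl
  apply_length := by simpa using hc.apply_length
  covBy t ht := by
    rcases t with _ | t
    · simpa [hc.apply_zero] using h
    · simpa using hc.covBy t (by omega)

theorem monotoneOn (hc : IsCoverChain c p a b) : MonotoneOn c (Iic p) :=
  monotoneOn_of_le_succ ordConnected_Iic fun t _ _ ht => by
    simp only [Nat.succ_eq_succ, Set.mem_Iic] at ht ⊢
    exact (hc.covBy t ht).le

theorem apply_le_iff_of_isGreatest (hc : IsCoverChain c p a b) {t r : ℕ} {m : α} (ht : t < p)
    (hr : r ≤ p) (hm : IsGreatest (Ici (c t) \ Ici (c (t + 1))) m) : c r ≤ m ↔ r ≤ t :=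
  ⟨fun h => not_lt.1 fun htr => hm.1.2 ((hc.monotoneOn (show t + 1 ≤ p by omega) hr htr).trans h),
    fun h => (hc.monotoneOn (show r ≤ p from hr) ht.le h).trans hm.1.1⟩

theorem eq_of_isGreatest (hc : IsCoverChain c p a b) {t u : ℕ} {m : α} (ht : t < p) (hu : u < p)
    (hmt : IsGreatest (Ici (c t) \ Ici (c (t + 1))) m)
    (hmu : IsGreatest (Ici (c u) \ Ici (c (u + 1))) m) : t = u :=
  le_antisymm ((hc.apply_le_iff_of_isGreatest hu ht.le hmu).1 hmt.1.1)
    ((hc.apply_le_iff_of_isGreatest ht hu.le hmt).1 hmu.1.1)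

end IsCoverChain

section CoverChainExistence

variable {L : Type*} [PartialOrder L] [Finite L]

theorem exists_covBy_le_of_isChain {T : Set L} (hT : IsChain (· ≤ ·) T) {a y : L} (hy : y ∈ T)
    (hay : a < y) : ∃ b, a ⋖ b ∧ ∀ x ∈ T, a < x → b ≤ x := by
  obtain ⟨y, hy⟩ := (toFinite (T ∩ Ioi a)).exists_minimal ⟨y, hy, hay⟩
  obtain ⟨b, hab, hby⟩ := exists_covBy_le_of_lt hy.prop.2
  exact ⟨b, hab, fun x hx hax =>
    hby.trans <| (hT.total hy.prop.1 hx).elim id (hy.le_of_le ⟨hx, hax⟩)⟩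

theorem exists_isCoverChain_of_isChain [OrderTop L] {T : Set L} (hT : IsChain (· ≤ ·) T)
    (hTop : ⊤ ∈ T) (a : L) (ha : ∀ x ∈ T, x ≤ a ∨ a ≤ x) :
    ∃ c p, IsCoverChain c p a ⊤ ∧ ∀ x ∈ T, a ≤ x → ∃ r ≤ p, c r = x := by
  induction a using WellFoundedGT.induction with
  | ind a ih =>
  rcases (le_top : a ≤ ⊤).eq_or_lt with rfl | hlt
  · exact ⟨fun _ => ⊤, 0, ⟨rfl, rfl, fun _ h => absurd h (Nat.not_lt_zero _)⟩,
      fun x _ hx => ⟨0, le_rfl, (top_le_iff.1 hx).symm⟩⟩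
  obtain ⟨b, hab, hb⟩ := exists_covBy_le_of_isChain hT hTop hlt
  have hbT : ∀ x ∈ T, x ≤ b ∨ b ≤ x := fun x hx => by
    rcases ha x hx with hxa | hax
    · exact .inl (hxa.trans hab.le)
    rcases hax.eq_or_lt with rfl | hax
    exacts [.inl hab.le, .inr (hb x hx hax)]
  obtain ⟨c, p, hc, hcT⟩ := ih b hab.lt hbT
  refine ⟨_, p + 1, hc.cons hab, fun x hx hax => ?_⟩
  rcases hax.eq_or_lt with rfl | hax
  · exact ⟨0, Nat.zero_le _, rfl⟩
  · obtain ⟨r, hr, rfl⟩ := hcT x hx (hb x hx hax)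
    exact ⟨r + 1, by omega, by simp⟩

theorem exists_isCoverChain_bot_top_of_isChain [BoundedOrder L] {T : Set L}
    (hT : IsChain (· ≤ ·) T) : ∃ c p, IsCoverChain c p ⊥ ⊤ ∧ ∀ x ∈ T, ∃ r ≤ p, c r = x := by
  obtain ⟨c, p, hc, hcT⟩ := exists_isCoverChain_of_isChain (hT.insert fun _ _ _ => .inr le_top)
    (mem_insert _ _) ⊥ fun _ _ => .inr bot_le
  exact ⟨c, p, hc, fun x hx => hcT x (mem_insert_of_mem _ hx) bot_le⟩

end CoverChainExistence

theorem exists_isCoverChain_cover_supIrred {L : Type*} [Lattice L] [BoundedOrder L] [Finite L]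
    {n k : ℕ} (hlength : ∀ c p, IsCoverChain c p (⊥ : L) ⊤ → p = n)
    (hwidth : ∀ A : Finset L, IsAntichain (· ≤ ·) (A : Set L) →
      (∀ a ∈ A, SupIrred a) → A.card ≤ k) :
    ∃ c : Fin k → ℕ → L, (∀ i, IsCoverChain (c i) n ⊥ ⊤) ∧
      ∀ x, SupIrred x → ∃ i, ∃ r ≤ n, c i r = x := by
  obtain ⟨col, hcol⟩ := exists_chain_coloring_of_antichain_card_le (β := {x : L // SupIrred x})
    fun A hA => by
      simpa using hwidth (A.map (Embedding.subtype _))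
        (by rw [Finset.coe_map]; exact hA.image _ fun _ _ => id)
        fun _ ha => by obtain ⟨x, -, rfl⟩ := Finset.mem_map.1 ha; exact x.2
  choose c p hc hcT using fun i =>
    exists_isCoverChain_bot_top_of_isChain ((hcol i).image (OrderEmbedding.subtype _))
  have hp : ∀ i, p i = n := fun i => hlength _ _ (hc i)
  refine ⟨c, fun i => hp i ▸ hc i, fun x hx => ?_⟩
  obtain ⟨r, hr, hrx⟩ := hcT (col ⟨x, hx⟩) x ⟨⟨x, hx⟩, rfl, rfl⟩
  exact ⟨_, r, hp _ ▸ hr, hrx⟩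

theorem isGreatest_Ici_diff_Ici_sup_of_maximal {L : Type*} [Lattice L] {a b d m : L} (had : a ≤ d)
    (hdm : d ≤ m) (hm : Maximal (· ∈ Ici a \ Ici b) m)
    (hd : ∃ m', IsGreatest (Ici d \ Ici (d ⊔ b)) m') : IsGreatest (Ici d \ Ici (d ⊔ b)) m := by
  obtain ⟨m', hm'⟩ := hd
  have hmem : m ∈ Ici d \ Ici (d ⊔ b) := ⟨hdm, fun h => hm.prop.2 (le_sup_right.trans h)⟩
  rwa [hm.eq_of_le ⟨had.trans hm'.1.1, fun h => hm'.1.2 (sup_le hm'.1.1 h)⟩ (hm'.2 hmem)]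

namespace JoinDistributive

variable {L : Type*} [Lattice L] [BoundedOrder L] [Finite L]

theorem inf_sup_eq_of_covBy (hJD : JoinDistributive L) {x a b c d e : L} (hxa : x ≤ a)
    (hade : a ≤ d ⊔ e) (hd : x ⋖ d) (he : x ⋖ e) (hb : x ⋖ b) (hc : x ⋖ c) :
    a ⊓ (b ⊔ c) = a ⊓ b ⊔ a ⊓ c := by
  have := Fintype.ofFinite L
  let _ := Fintype.toCompleteLattice L
  have hle : ∀ {y}, x ⋖ y → y ≤ sSup {y | x ⋖ y} := fun hy => le_sSup hy
  exact hJD x _ hd.lt.not_isMax (isLUB_sSup _) a ⟨hxa, hade.trans (sup_le (hle hd) (hle he))⟩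
    b ⟨hb.le, hle hb⟩ c ⟨hc.le, hle hc⟩

theorem covBy_sup_of_inf_covBy (hJD : JoinDistributive L) {z b : L} (h : z ⊓ b ⋖ b) :
    z ⋖ z ⊔ b := by
  induction z using WellFoundedLT.induction with
  | ind z ih =>
  have hbz : ¬ b ≤ z := fun hb => h.ne (inf_eq_right.2 hb)
  rcases (inf_le_left : z ⊓ b ≤ z).eq_or_lt with hz | hlt
  · rw [hz] at h
    rwa [sup_eq_right.2 h.le]
  obtain ⟨z', hz'b, hz'z⟩ := exists_le_covBy_of_lt hlt
  have hinf : z' ⊓ b = z ⊓ b :=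
    le_antisymm (inf_le_inf_right b hz'z.le) (le_inf hz'b inf_le_right)
  have hw : z' ⋖ z' ⊔ b := ih z' hz'z.lt (hinf ▸ h)
  have hsup : z ⊔ (z' ⊔ b) = z ⊔ b := by rw [← sup_assoc, sup_eq_left.2 hz'z.le]
  refine ⟨left_lt_sup.2 hbz, fun t hzt htzb => ?_⟩
  -- `z` and `z' ⊔ b` both cover `z'`, so `t` is distributive with them
  have hdist : t ⊓ (z ⊔ (z' ⊔ b)) = t ⊓ z ⊔ t ⊓ (z' ⊔ b) :=
    hJD.inf_sup_eq_of_covBy (hz'z.le.trans hzt.le) (hsup ▸ htzb.le) hz'z hw hz'z hw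
  rw [hsup, inf_eq_left.2 htzb.le, inf_eq_right.2 hzt.le] at hdist
  rcases hw.eq_or_eq (le_inf (hz'z.le.trans hzt.le) le_sup_left) inf_le_right with h' | h'
  · rw [h', sup_eq_left.2 hz'z.le] at hdist
    exact hzt.ne' hdist
  · rw [h', hsup] at hdist
    exact htzb.ne hdist


theorem eq_of_maximal_Ici_diff_Ici (hJD : JoinDistributive L) {a b m₁ m₂ : L} (hab : a ⋖ b)
    (ih : ∀ d, a < d → ∀ b', d ⋖ b' → ∃ m, IsGreatest (Ici d \ Ici b') m)
    (h₁ : Maximal (· ∈ Ici a \ Ici b) m₁) (h₂ : Maximal (· ∈ Ici a \ Ici b) m₂) : m₁ = m₂ := by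
  rcases h₁.prop.1.eq_or_lt with ha₁ | ha₁
  · exact h₁.eq_of_le h₂.prop (ha₁ ▸ h₂.prop.1)
  rcases h₂.prop.1.eq_or_lt with ha₂ | ha₂
  · exact (h₂.eq_of_le h₁.prop (ha₂ ▸ h₁.prop.1)).symm
  have ih' : ∀ {d}, a < d → b ⊓ d = a → ∃ m, IsGreatest (Ici d \ Ici (d ⊔ b)) m :=
    fun had hbd => ih _ had _ (hJD.covBy_sup_of_inf_covBy (by rwa [inf_comm, hbd]))
  have hbd : ∀ {d m}, a ⋖ d → d ≤ m → m ∈ Ici a \ Ici b → b ⊓ d = a := fun had hdm hm =>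
    (hab.eq_or_eq (le_inf hab.le had.le) inf_le_left).resolve_right
      fun h => hm.2 ((h ▸ inf_le_right : b ≤ _).trans hdm)
  obtain ⟨d₁, had₁, hd₁⟩ := exists_covBy_le_of_lt ha₁
  obtain ⟨d₂, had₂, hd₂⟩ := exists_covBy_le_of_lt ha₂
  have hbd₁ := hbd had₁ hd₁ h₁.prop
  have hbd₂ := hbd had₂ hd₂ h₂.prop
  have hbe : b ⊓ (d₁ ⊔ d₂) = a := by
    rw [hJD.inf_sup_eq_of_covBy hab.le le_sup_left hab hab had₁ had₂, hbd₁, hbd₂, sup_idem]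
  have hae : a < d₁ ⊔ d₂ := had₁.lt.trans_le le_sup_left
  have hmem : ∀ {d}, d ≤ d₁ ⊔ d₂ → d₁ ⊔ d₂ ∈ Ici d \ Ici (d ⊔ b) := fun hd =>
    ⟨hd, fun h => hab.ne (hbe.symm.trans (inf_eq_left.2 (le_sup_right.trans h)))⟩
  -- both `m₁` and `m₂` are the largest element of `Ici e \ Ici (e ⊔ b)` for `e = d₁ ⊔ d₂`
  have he₁ := (isGreatest_Ici_diff_Ici_sup_of_maximal had₁.le hd₁ h₁
    (ih' had₁.lt hbd₁)).2 (hmem le_sup_left)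
  have he₂ := (isGreatest_Ici_diff_Ici_sup_of_maximal had₂.le hd₂ h₂
    (ih' had₂.lt hbd₂)).2 (hmem le_sup_right)
  exact (isGreatest_Ici_diff_Ici_sup_of_maximal hae.le he₁ h₁ (ih' hae hbe)).unique
    (isGreatest_Ici_diff_Ici_sup_of_maximal hae.le he₂ h₂ (ih' hae hbe))

theorem exists_isGreatest_Ici_diff_Ici (hJD : JoinDistributive L) {a b : L} (hab : a ⋖ b) :
    ∃ m, IsGreatest (Ici a \ Ici b) m := by
  induction a using WellFoundedGT.induction generalizing b with
  | ind a ih =>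
  obtain ⟨m, -, hm⟩ := (toFinite (Ici a \ Ici b)).exists_le_maximal
    (show a ∈ Ici a \ Ici b from ⟨le_rfl, hab.lt.not_ge⟩)
  refine ⟨m, hm.prop, fun z hz => ?_⟩
  obtain ⟨mz, hzmz, hmz⟩ := (toFinite _).exists_le_maximal hz
  exact hzmz.trans (hJD.eq_of_maximal_Ici_diff_Ici hab (fun d hd _ => ih d hd) hmz hm).le

theorem exists_isGreatest_of_isCoverChain (hJD : JoinDistributive L) {a b m : L} {d : ℕ → L}
    {q : ℕ} (hm : IsGreatest (Ici a \ Ici b) m) (hd : IsCoverChain d q ⊥ ⊤) :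
    ∃ s < q, IsGreatest (Ici (d s) \ Ici (d (s + 1))) m := by
  classical
  set s := Nat.findGreatest (fun r => d r ≤ m) q
  have hds : d s ≤ m :=
    Nat.findGreatest_spec (P := fun r => d r ≤ m) (Nat.zero_le q) (hd.apply_zero ▸ bot_le)
  have hsq : s < q := (Nat.findGreatest_le q).lt_of_ne fun h =>
    hm.1.2 (le_top.trans (by rw [← hd.apply_length, ← h]; exact hds))
  have hds' : ¬ d (s + 1) ≤ m := Nat.findGreatest_is_greatest (Nat.lt_succ_self s) hsq
  obtain ⟨m', hm'⟩ := hJD.exists_isGreatest_Ici_diff_Ici (hd.covBy s hsq)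
  have hmm' : m ≤ m' := hm'.2 ⟨hds, hds'⟩
  refine ⟨s, hsq, ?_⟩
  -- `s` is the last step of `d` below `m`; if its label `m'` exceeded `m`, semimodularity would
  -- force `d (s + 1) ≤ m ⊔ b ≤ m'`
  suffices m' = m by rwa [← this]
  by_contra hne
  have hlt : m < m' := hmm'.lt_of_ne (Ne.symm hne)
  have habove : ∀ {w}, m < w → b ≤ w := fun hw =>
    by_contra fun h => hw.not_ge (hm.2 ⟨hm.1.1.trans hw.le, h⟩)
  have hinf : m ⊓ d (s + 1) = d s :=
    ((hd.covBy s hsq).eq_or_eq (le_inf hds (hd.covBy s hsq).le) inf_le_right).resolve_right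
      fun h => hds' (h ▸ inf_le_left)
  have hcov : m ⋖ m ⊔ d (s + 1) := hJD.covBy_sup_of_inf_covBy (hinf ▸ hd.covBy s hsq)
  have hsup : m ⊔ b = m ⊔ d (s + 1) :=
    (hcov.eq_or_eq le_sup_left (sup_le le_sup_left (habove hcov.lt))).resolve_left
      fun h => hm.1.2 (h ▸ le_sup_right)
  exact hm'.1.2 ((le_sup_right.trans hsup.ge).trans (sup_le hmm' (habove hlt)))

theorem length_le_of_isCoverChain (hJD : JoinDistributive L) {c d : ℕ → L} {p q : ℕ}
    (hc : IsCoverChain c p ⊥ ⊤) (hd : IsCoverChain d q ⊥ ⊤) : p ≤ q := by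
  have key : ∀ t : Fin p, ∃ s : Fin q, ∃ m, IsGreatest (Ici (c t) \ Ici (c (t + 1))) m ∧
      IsGreatest (Ici (d s) \ Ici (d (s + 1))) m := fun t => by
    obtain ⟨m, hm⟩ := hJD.exists_isGreatest_Ici_diff_Ici (hc.covBy t t.2)
    obtain ⟨s, hs, hsm⟩ := hJD.exists_isGreatest_of_isCoverChain hm hd
    exact ⟨⟨s, hs⟩, m, hm, hsm⟩
  choose g m hmc hmd using key
  have hg : Injective g := fun t u h => by
    have hm : m t = m u := (hmd t).unique (h ▸ hmd u)
    exact Fin.ext (hc.eq_of_isGreatest t.2 u.2 (hmc t) (hm ▸ hmc u))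
  simpa using Fintype.card_le_of_injective g hg

theorem length_eq_of_krullDim_eq (hJD : JoinDistributive L) {n : ℕ}
    (hlen : Order.krullDim L = n) {c : ℕ → L} {p : ℕ} (hc : IsCoverChain c p ⊥ ⊤) : p = n := by
  refine le_antisymm ?_ ?_
  · have := Order.LTSeries.length_le_krullDim <| LTSeries.mk p (fun i => c i) <|
      Fin.strictMono_iff_lt_succ.2 fun i => by simpa using (hc.covBy i i.2).lt
    exact_mod_cast hlen ▸ this
  · obtain ⟨l, rfl⟩ := Order.le_krullDim_iff.1 hlen.ge
    obtain ⟨d, q, hd, hdl⟩ :=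
      exists_isCoverChain_bot_top_of_isChain l.strictMono.monotone.isChain_range
    choose r hr hrl using fun i => hdl (l i) (mem_range_self i)
    have hinj : Injective fun i => (⟨r i, Nat.lt_succ_of_le (hr i)⟩ : Fin (q + 1)) :=
      fun i j h => l.strictMono.injective (by rw [← hrl i, ← hrl j]; simp_all)
    have := Fintype.card_le_of_injective _ hinj
    simp only [Fintype.card_fin, add_le_add_iff_right] at this
    exact this.trans (hJD.length_le_of_isCoverChain hd hc)

end JoinDistributive

theorem exists_perm_comp_eq {ι α : Type*} [Finite ι] {f g : ι → α} (hf : Injective f)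
    (h : ∀ i, ∃ j, g j = f i) : ∃ σ : Equiv.Perm ι, ∀ i, g (σ i) = f i := by
  choose σ hσ using h
  have hσ' : Injective σ := fun i j hij => hf (by rw [← hσ i, ← hσ j, hij])
  exact ⟨Equiv.ofBijective σ (Finite.injective_iff_bijective.1 hσ'), hσ⟩

section Coordinates

section SingleChain

open Classical

noncomputable def chainCoord {L : Type*} [LE L] (c : ℕ → L) (n : ℕ) (x : L) : ℕ :=
  Nat.findGreatest (fun r => c r ≤ x) n

theorem chainCoord_le {L : Type*} [LE L] {c : ℕ → L} {n : ℕ} (x : L) : chainCoord c n x ≤ n :=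
  Nat.findGreatest_le n

variable {L : Type*} [Lattice L] [BoundedOrder L] {c : ℕ → L} {n : ℕ}

theorem le_chainCoord_iff (hc : IsCoverChain c n ⊥ ⊤) {x : L} {r : ℕ} (hr : r ≤ n) :
    r ≤ chainCoord c n x ↔ c r ≤ x := by
  refine ⟨fun h => (hc.monotoneOn hr (chainCoord_le x) h).trans ?_,
    Nat.le_findGreatest (P := fun r => c r ≤ x) hr⟩
  exact Nat.findGreatest_spec (P := fun r => c r ≤ x) (Nat.zero_le n) (hc.apply_zero ▸ bot_le)

theorem apply_chainCoord_le (hc : IsCoverChain c n ⊥ ⊤) (x : L) : c (chainCoord c n x) ≤ x :=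
  (le_chainCoord_iff hc (chainCoord_le x)).1 le_rfl

theorem le_of_isGreatest_chainCoord (hc : IsCoverChain c n ⊥ ⊤) {x m : L}
    (hx : chainCoord c n x < n)
    (hm : IsGreatest (Ici (c (chainCoord c n x)) \ Ici (c (chainCoord c n x + 1))) m) : x ≤ m :=
  hm.2 ⟨apply_chainCoord_le hc x, fun h => by simpa using (le_chainCoord_iff hc hx).2 h⟩

end SingleChain

variable {L : Type*} [Lattice L] [BoundedOrder L] {n k : ℕ} {c : Fin k → ℕ → L}

theorem eq_sup_chainCoord [Finite L] (hc : ∀ i, IsCoverChain (c i) n ⊥ ⊤)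
    (hcover : ∀ x, SupIrred x → ∃ i, ∃ r ≤ n, c i r = x) (x : L) :
    x = Finset.univ.sup fun i => c i (chainCoord (c i) n x) := by
  refine le_antisymm ?_ (Finset.sup_le fun i _ => apply_chainCoord_le (hc i) x)
  obtain ⟨s, rfl, hs⟩ := exists_supIrred_decomposition x
  refine Finset.sup_le fun b hb => ?_
  obtain ⟨i, r, hr, rfl⟩ := hcover b (hs hb)
  have hri : r ≤ chainCoord (c i) n (s.sup id) :=
    (le_chainCoord_iff (hc i) hr).2 (Finset.le_sup (f := id) hb)
  exact ((hc i).monotoneOn hr (chainCoord_le _) hri).trans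
    (Finset.le_sup (f := fun i => c i (chainCoord (c i) n (s.sup id))) (Finset.mem_univ i))

theorem chainCoord_le_chainCoord_iff [Finite L] (hc : ∀ i, IsCoverChain (c i) n ⊥ ⊤)
    (hcover : ∀ x, SupIrred x → ∃ i, ∃ r ≤ n, c i r = x) {x y : L} :
    (∀ i, chainCoord (c i) n x ≤ chainCoord (c i) n y) ↔ x ≤ y := by
  refine ⟨fun h => (eq_sup_chainCoord hc hcover x).trans_le (Finset.sup_le fun i _ => ?_),
    fun h i => (le_chainCoord_iff (hc i) (chainCoord_le x)).2
      ((apply_chainCoord_le (hc i) x).trans h)⟩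
  exact ((hc i).monotoneOn (chainCoord_le x) (chainCoord_le y) (h i)).trans
    (apply_chainCoord_le (hc i) y)

variable {lab : Fin k → Fin n → L}

theorem range_chainCoord (hc : ∀ i, IsCoverChain (c i) n ⊥ ⊤)
    (hlab : ∀ i (t : Fin n), IsGreatest (Ici (c i t) \ Ici (c i (t + 1))) (lab i t)) :
    range (fun x i => chainCoord (c i) n x) =
      {v | (∀ i, v i ≤ n) ∧ ∀ i j (h : v i < n), c j (v j) ≤ lab i ⟨v i, h⟩} := by
  ext v
  constructor
  · rintro ⟨x, rfl⟩
    exact ⟨fun i => chainCoord_le x, fun i j h => (apply_chainCoord_le (hc j) x).trans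
      (le_of_isGreatest_chainCoord (hc i) h (hlab i ⟨_, h⟩))⟩
  · rintro ⟨hvn, hv⟩
    refine ⟨Finset.univ.sup fun j => c j (v j), funext fun i => le_antisymm ?_ ?_⟩
    · refine le_of_not_gt fun hlt => ?_
      have hvi : v i < n := hlt.trans_le (chainCoord_le _)
      exact (hlab i ⟨v i, hvi⟩).1.2 (((le_chainCoord_iff (hc i) hvi).1 hlt).trans
        (Finset.sup_le fun j _ => hv i j hvi))
    · exact (le_chainCoord_iff (hc i) (hvn i)).2
        (Finset.le_sup (f := fun j => c j (v j)) (Finset.mem_univ i))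

theorem eligible_iff (hc : ∀ i, IsCoverChain (c i) n ⊥ ⊤)
    (hlab : ∀ i (t : Fin n), IsGreatest (Ici (c i t) \ Ici (c i (t + 1))) (lab i t))
    {π : Fin k → Equiv.Perm (Fin n)} (hπ : ∀ i j t, lab j (π j ((π i)⁻¹ t)) = lab i t)
    {v : Fin k → ℕ} :
    Eligible π v ↔ (∀ i, v i ≤ n) ∧ ∀ i j (h : v i < n), c j (v j) ≤ lab i ⟨v i, h⟩ := by
  refine and_congr_right fun hvn => forall₂_congr fun i j => forall_congr' fun h => ?_
  rw [← hπ i j, (hc j).apply_le_iff_of_isGreatest (Fin.is_lt _) (hvn j) (hlab j _),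
    Nat.add_le_add_iff_right]

end Coordinates

theorem JoinDistributive.exists_orderIso_eligible {L : Type*} [Lattice L] [BoundedOrder L]
    [Finite L] (hJD : JoinDistributive L) {n k : ℕ} {c : Fin k → ℕ → L}
    (hc : ∀ i, IsCoverChain (c i) n ⊥ ⊤) (hcover : ∀ x, SupIrred x → ∃ i, ∃ r ≤ n, c i r = x)
    (i₀ : Fin k) :
    ∃ π : Fin k → Equiv.Perm (Fin n), π i₀ = 1 ∧ Nonempty (L ≃o {x // Eligible π x}) := by
  choose lab hlab using fun i (t : Fin n) =>
    hJD.exists_isGreatest_Ici_diff_Ici ((hc i).covBy t t.2)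
  have hinj : ∀ i, Injective (lab i) := fun i t u h =>
    Fin.ext ((hc i).eq_of_isGreatest t.2 u.2 (hlab i t) (h ▸ hlab i u))
  have hcross : ∀ i j t, ∃ s, lab j s = lab i t := fun i j t => by
    obtain ⟨s, hs, hsm⟩ := hJD.exists_isGreatest_of_isCoverChain (hlab i t) (hc j)
    exact ⟨⟨s, hs⟩, (hlab j ⟨s, hs⟩).unique hsm⟩
  choose π hπ using fun i => exists_perm_comp_eq (hinj i₀) (hcross i₀ i)
  -- the permutation `π_{ij}` sends a step of chain `i` to the step of chain `j` with its label
  have hbridge : ∀ i j t, lab j (π j ((π i)⁻¹ t)) = lab i t := fun i j t => by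
    rw [hπ, ← hπ i, Equiv.Perm.coe_inv, Equiv.apply_symm_apply]
  refine ⟨π, Equiv.ext fun t => hinj i₀ (hπ i₀ t), ⟨?_⟩⟩
  let Φ : L ↪o (Fin k → ℕ) :=
    OrderEmbedding.ofMapLEIff _ fun _ _ => chainCoord_le_chainCoord_iff hc hcover
  exact Φ.orderIso.trans <| OrderIso.setCongr _ _ <| (range_chainCoord hc hlab).trans <| by
    ext v
    exact (eligible_iff hc hlab hbridge).symm

/-- Every join-distributive (finite) lattice of length `n` and
join-width at most `k` (with `n ≥ 1`, `k ≥ 2`) is order-isomorphic (equivalently,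
isomorphic as a lattice) to the `π`-coordinatized lattice `C(π)` for some `(k-1)`-tuple
`π = (π_{12},…,π_{1k})` of permutations of `{1,…,n}` (encoded as
`π : Fin k → Equiv.Perm (Fin n)` with `π 0 = id` playing the role of `π_{11}`). -/
theorem statement7 (n k : ℕ) (hk : 2 ≤ k)
    (L : Type*) [Lattice L] [Fintype L]
    (hJD : JoinDistributive L) (hlen : Order.krullDim L = n)
    (hwidth : ∀ A : Finset L, IsAntichain (· ≤ ·) (A : Set L) →
      (∀ a ∈ A, SupIrred a) → A.card ≤ k) :
    ∃ π : Fin k → Equiv.Perm (Fin n),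
      π ⟨0, by omega⟩ = 1 ∧ Nonempty (L ≃o {x : Fin k → ℕ // Eligible π x}) := by
  have : Nonempty L := not_isEmpty_iff.1 fun h => by
    simp [Order.krullDim_eq_bot_iff.2 h] at hlen
  let _ : BoundedOrder L := Fintype.toBoundedOrder L
  obtain ⟨c, hc, hcover⟩ := exists_isCoverChain_cover_supIrred
    (fun _ _ => hJD.length_eq_of_krullDim_eq hlen) hwidth
  exact hJD.exists_orderIso_eligible hc hcover _
end

section
/- If L is a semimodular lattice of finite length such that no two distinct comparable prime intervals of L belong to the same trajectory, then L is finite. -/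
/-- A lattice is (upper) semimodular if `a ⊓ b ⋖ b` implies `a ⋖ a ⊔ b`. -/
def Semimodular (α : Type*) [Lattice α] : Prop :=
  ∀ a b : α, a ⊓ b ⋖ b → a ⋖ a ⊔ b

/-- `{x, y, z, w}` is a covering square: a 4-element cover-preserving boolean sublattice,
with bottom `x`, middle elements `y ≠ z` (whose meet is `x` and join is `w`), and top `w`. -/
def IsCoveringSquare {α : Type*} [PartialOrder α] (x y z w : α) : Prop :=
  y ≠ z ∧ IsGLB {y, z} x ∧ IsLUB {y, z} w ∧ x ⋖ y ∧ x ⋖ z ∧ y ⋖ w ∧ z ⋖ w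

/-- Two (prime) intervals `[p.1, p.2]` and `[q.1, q.2]` are consecutive if
`{p.1, p.2, q.1, q.2}` is a covering square. -/
def Consecutive {α : Type*} [PartialOrder α] (p q : α × α) : Prop :=
  ∃ x y z w : α, IsCoveringSquare x y z w ∧
    ({p.1, p.2, q.1, q.2} : Set α) = {x, y, z, w}

/-- The prime intervals `[a, b]` (with `a ⋖ b`) of a poset. -/
abbrev PrimeInterval (α : Type*) [PartialOrder α] := {p : α × α // p.1 ⋖ p.2}

/-- Two prime intervals belong to the same trajectory iff they are related by the
reflexive-transitive closure of the consecutiveness relation. -/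
def SameTrajectory {α : Type*} [PartialOrder α] (p q : PrimeInterval α) : Prop :=
  Relation.ReflTransGen (fun a b : PrimeInterval α => Consecutive a.val b.val) p q

/-!
Let `a, b, c` be distinct covers of `u`. If `a ⊔ b = a ⊔ c =: t`, then also `b ⊔ c = t`, and the
three covering squares on `u ⋖ a, b, c ⋖ t` link `[u, a]` to `[b, t]`, `[u, c]` and `[a, t]`,
two comparable prime intervals. Hence `b ↦ a ⊔ b` maps the other covers of `u` injectively to
covers of `a`, and well-founded induction from the top shows that every element has finitely
many covers. In a lattice of finite length this makes the lattice finite.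
-/

section FiniteLength

variable {α : Type*}

instance FiniteDimensionalOrder.wellFoundedLT [Preorder α] [FiniteDimensionalOrder α] :
    WellFoundedLT α :=
  ⟨SetRel.IsWellFounded.of_finiteDimensional {(a, b) : α × α | a < b}⟩

instance FiniteDimensionalOrder.wellFoundedGT [Preorder α] [FiniteDimensionalOrder α] :
    WellFoundedGT α :=
  ⟨SetRel.IsWellFounded.inv_of_finiteDimensional {(a, b) : α × α | a < b}⟩

theorem Set.finite_Ici_of_finite_setOf_covBy [PartialOrder α] [WellFoundedGT α]
    [IsStronglyAtomic α] (hcov : ∀ x : α, {y | x ⋖ y}.Finite) (x : α) :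
    (Set.Ici x).Finite := by
  induction x using WellFoundedGT.induction with
  | _ x ih =>
    refine (((hcov x).biUnion fun y hy => ih y hy.lt).insert x).subset fun z hxz => ?_
    obtain rfl | hlt := (Set.mem_Ici.mp hxz).eq_or_lt
    · exact Set.mem_insert _ _
    · obtain ⟨y, hxy, hyz⟩ := exists_covBy_le_of_lt hlt
      exact Set.mem_insert_of_mem _ (Set.mem_biUnion hxy hyz)

theorem Finite.of_finite_setOf_covBy [Lattice α] [WellFoundedLT α] [WellFoundedGT α]
    (hcov : ∀ x : α, {y | x ⋖ y}.Finite) : Finite α := by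
  cases isEmpty_or_nonempty α
  · infer_instance
  obtain ⟨m, -, hm⟩ := wellFounded_lt.has_min (Set.univ : Set α) Set.univ_nonempty
  have hbot : ∀ y, m ≤ y := fun y =>
    inf_eq_left.mp ((inf_le_left.lt_or_eq).resolve_left (hm _ trivial))
  exact Set.finite_univ_iff.mp
    ((Set.finite_Ici_of_finite_setOf_covBy hcov m).subset fun y _ => hbot y)

end FiniteLength

section Trajectories

variable {α : Type*}

theorem Consecutive.symm [PartialOrder α] {p q : α × α} (h : Consecutive p q) :
    Consecutive q p := by
  obtain ⟨x, y, z, w, hsq, hset⟩ := h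
  refine ⟨x, y, z, w, hsq, ?_⟩
  rw [← hset]
  ext
  simp only [Set.mem_insert_iff, Set.mem_singleton_iff]
  tauto

theorem IsCoveringSquare.consecutive [PartialOrder α] {x y z w : α}
    (h : IsCoveringSquare x y z w) : Consecutive (x, y) (z, w) :=
  ⟨x, y, z, w, h, rfl⟩

theorem Semimodular.isUpperModularLattice [Lattice α] (hsm : Semimodular α) :
    IsUpperModularLattice α where
  covBy_sup_of_inf_covBy {a b} h := by
    rw [inf_comm] at h
    simpa only [sup_comm] using hsm b a h

theorem CovBy.covBy_sup_of_covBy [Lattice α] [IsWeakUpperModularLattice α] {u a b : α}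
    (ha : u ⋖ a) (hb : u ⋖ b) (hab : a ≠ b) : a ⋖ a ⊔ b := by
  have hinf : a ⊓ b = u := ha.wcovBy.inf_eq hb.wcovBy hab
  exact covBy_sup_of_inf_covBy_of_inf_covBy_left (hinf ▸ ha) (hinf ▸ hb)

theorem isCoveringSquare_sup [Lattice α] [IsWeakUpperModularLattice α] {u a b : α}
    (ha : u ⋖ a) (hb : u ⋖ b) (hab : a ≠ b) : IsCoveringSquare u a b (a ⊔ b) :=
  ⟨hab, ha.wcovBy.inf_eq hb.wcovBy hab ▸ isGLB_pair, isLUB_pair, ha, hb,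
    ha.covBy_sup_of_covBy hb hab, sup_comm b a ▸ hb.covBy_sup_of_covBy ha hab.symm⟩

def NoComparableInTrajectory (α : Type*) [PartialOrder α] : Prop :=
  ∀ p q : PrimeInterval α, p ≠ q →
    (p.val.2 ≤ q.val.1 ∨ q.val.2 ≤ p.val.1) → ¬ SameTrajectory p q

variable [Lattice α] [IsWeakUpperModularLattice α]

theorem NoComparableInTrajectory.injOn_sup (hL : NoComparableInTrajectory α) {u a : α}
    (ha : u ⋖ a) : Set.InjOn (a ⊔ ·) ({b | u ⋖ b} \ {a}) := by
  rintro b ⟨hb, hab⟩ c ⟨hc, hac⟩ (hsup : a ⊔ b = a ⊔ c)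
  by_contra hbc
  set t := a ⊔ b
  have sq_ab : IsCoveringSquare u a b t := isCoveringSquare_sup ha hb (Ne.symm hab)
  have sq_ca : IsCoveringSquare u c a t := by
    simpa only [sup_comm c a, ← hsup] using isCoveringSquare_sup hc ha hac
  have hbt : b ⋖ t := sq_ab.2.2.2.2.2.2
  have hct : c ⋖ t := sq_ca.2.2.2.2.2.1
  have hat : a ⋖ t := sq_ca.2.2.2.2.2.2
  have sq_cb : IsCoveringSquare u c b t := by
    simpa only [hct.wcovBy.sup_eq hbt.wcovBy (Ne.symm hbc)] using
      isCoveringSquare_sup hc hb (Ne.symm hbc)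
  have hne : (⟨(u, a), ha⟩ : PrimeInterval α) ≠ ⟨(a, t), hat⟩ := fun h =>
    ha.ne (congrArg (·.val.1) h)
  refine hL _ _ hne (Or.inl le_rfl) ?_
  exact .tail (.tail (.single (b := ⟨(b, t), hbt⟩) sq_ab.consecutive) (c := ⟨(u, c), hc⟩)
    sq_cb.consecutive.symm) sq_ca.consecutive

theorem NoComparableInTrajectory.finite_setOf_covBy [WellFoundedGT α]
    (hL : NoComparableInTrajectory α) (u : α) : {a | u ⋖ a}.Finite := by
  induction u using WellFoundedGT.induction with
  | _ u ih =>
    obtain hempty | ⟨a, ha⟩ := Set.eq_empty_or_nonempty {a | u ⋖ a}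
    · exact hempty ▸ Set.finite_empty
    have hmaps : Set.MapsTo (a ⊔ ·) ({b | u ⋖ b} \ {a}) {b | a ⋖ b} := fun b ⟨hb, hab⟩ =>
      ha.covBy_sup_of_covBy hb (Ne.symm hab)
    exact ((ih a ha.lt).of_injOn hmaps (hL.injOn_sup ha)).of_sdiff (Set.finite_singleton a)

end Trajectories

/-- If `L` is a semimodular lattice of finite length such that no two
distinct comparable prime intervals of `L` belong to the same trajectory, then `L` is
finite. -/
theorem statement12 (L : Type*) [Lattice L] (hsm : Semimodular L)
    (hfl : Order.krullDim L ≠ ⊤)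
    (h : ∀ p q : PrimeInterval L, p ≠ q →
      (p.val.2 ≤ q.val.1 ∨ q.val.2 ≤ p.val.1) → ¬ SameTrajectory p q) :
    Finite L := by
  cases isEmpty_or_nonempty L
  · infer_instance
  have : FiniteDimensionalOrder L :=
    Order.finiteDimensionalOrder_iff_krullDim_ne_bot_and_top.mpr
      ⟨Order.krullDim_ne_bot_iff.mpr ‹_›, hfl⟩
  have := hsm.isUpperModularLattice
  exact Finite.of_finite_setOf_covBy (NoComparableInTrajectory.finite_setOf_covBy h)
end

section
/- Let 𝔉 be an antimatroid on {1,…,n}, regarded as a lattice under set inclusion. For every trajectory T of 𝔉 there exists an element x_T ∈ {1,…,n} such that X = Y \ {x_T} holds for every prime interval [X,Y] belonging to T. -/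
/-- An antimatroid on `{1,…,n}` (encoded as `Fin n`): a family of subsets closed under
union, containing `∅`, such that every nonempty member `X` has an element `a` with
`X \ {a}` in the family. -/
def IsAntimatroid {n : ℕ} (F : Set (Finset (Fin n))) : Prop :=
  ∅ ∈ F ∧ (∀ X ∈ F, ∀ Y ∈ F, X ∪ Y ∈ F) ∧
    ∀ X ∈ F, X ≠ ∅ → ∃ a ∈ X, X.erase a ∈ F

/-- Augmentation: in an accessible, union-closed family, if `Y ⊄ X` then some element
of `Y \ X` can be added to `X` staying in the family. -/
lemma antimatroid_augment {n : ℕ} {F : Set (Finset (Fin n))} (hF : IsAntimatroid F) :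
    ∀ Y ∈ F, ∀ X ∈ F, ¬ Y ⊆ X → ∃ a ∈ Y, a ∉ X ∧ insert a X ∈ F := by
  intro Y
  induction Y using Finset.strongInduction with
  | _ Y ih =>
    intro hY X hX hns
    have hYne : Y ≠ ∅ := by rintro rfl; simp at hns
    obtain ⟨a, haY, ha⟩ := hF.2.2 Y hY hYne
    by_cases h : Y.erase a ⊆ X
    · have haX : a ∉ X := fun haX => hns (fun b hb => by
        rcases eq_or_ne b a with rfl | hba
        · exact haX
        · exact h (Finset.mem_erase.2 ⟨hba, hb⟩))
      refine ⟨a, haY, haX, ?_⟩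
      have hu : X ∪ Y ∈ F := hF.2.1 X hX Y hY
      have heq : X ∪ Y = insert a X := by
        ext b
        simp only [Finset.mem_union, Finset.mem_insert]
        constructor
        · rintro (hb | hb)
          · exact Or.inr hb
          · rcases eq_or_ne b a with rfl | hba
            · exact Or.inl rfl
            · exact Or.inr (h (Finset.mem_erase.2 ⟨hba, hb⟩))
        · rintro (rfl | hb)
          · exact Or.inr haY
          · exact Or.inl hb
      rwa [heq] at hu
    · obtain ⟨b, hb, hbX, hins⟩ := ih (Y.erase a) (Finset.erase_ssubset haY) ha X hX h
      exact ⟨b, Finset.mem_of_mem_erase hb, hbX, hins⟩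

/-- Every cover in the lattice of feasible sets adds a single element. -/
lemma antimatroid_cover_insert {n : ℕ} {F : Set (Finset (Fin n))} (hF : IsAntimatroid F)
    {U V : F} (h : U ⋖ V) :
    ∃ a ∈ V.val, a ∉ U.val ∧ V.val = insert a U.val := by
  have hlt : U.val ⊂ V.val := h.lt
  obtain ⟨a, haV, haU, hins⟩ :=
    antimatroid_augment hF V.val V.2 U.val U.2 (fun hs => hlt.2 hs)
  refine ⟨a, haV, haU, ?_⟩
  set W : F := ⟨insert a U.val, hins⟩ with hW
  have hUW : U < W := by
    have : U.val ⊂ insert a U.val := Finset.ssubset_insert haU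
    exact this
  have hWV : W ≤ V := by
    show insert a U.val ⊆ V.val
    exact Finset.insert_subset haV hlt.1
  rcases lt_or_eq_of_le hWV with hlt2 | heq
  · exact absurd hlt2 (h.2 hUW)
  · exact (congrArg Subtype.val heq).symm

/-- The top of a covering square is the union of the two middle elements. -/
lemma antimatroid_square_w {n : ℕ} {F : Set (Finset (Fin n))} (hF : IsAntimatroid F)
    {x y z w : F} (hs : IsCoveringSquare x y z w) : w.val = y.val ∪ z.val := by
  obtain ⟨hyz, hglb, hlub, cxy, cxz, cyw, czw⟩ := hs
  have hu : y.val ∪ z.val ∈ F := hF.2.1 y.val y.2 z.val z.2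
  have hub : w ∈ upperBounds {y, z} := hlub.1
  have h1 : y ≤ w := hub (by simp)
  have h2 : z ≤ w := hub (by simp)
  have hle : w ≤ (⟨y.val ∪ z.val, hu⟩ : F) := by
    apply hlub.2
    rintro c (rfl | rfl)
    · exact Finset.subset_union_left
    · exact Finset.subset_union_right
  exact le_antisymm hle (Finset.union_subset h1 h2)

/-- Opposite edges of a covering square add the same element. -/
lemma antimatroid_square_diff {n : ℕ} {F : Set (Finset (Fin n))} (hF : IsAntimatroid F)
    {x y z w : F} (hs : IsCoveringSquare x y z w) :
    y.val \ x.val = w.val \ z.val := by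
  have hw := antimatroid_square_w hF hs
  obtain ⟨hyz, hglb, hlub, cxy, cxz, cyw, czw⟩ := hs
  obtain ⟨a, haY, haX, hya⟩ := antimatroid_cover_insert hF cxy
  obtain ⟨b, hbZ, hbX, hzb⟩ := antimatroid_cover_insert hF cxz
  have hab : a ≠ b := by
    rintro rfl
    exact hyz (Subtype.ext (hya.trans hzb.symm))
  have h1 : y.val \ x.val = {a} := by
    rw [hya]; ext c
    simp only [Finset.mem_sdiff, Finset.mem_insert, Finset.mem_singleton]
    constructor
    · rintro ⟨rfl | hc, hcx⟩
      · rfl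
      · exact absurd hc hcx
    · rintro rfl; exact ⟨Or.inl rfl, haX⟩
  have h2 : w.val \ z.val = {a} := by
    rw [hw, hya, hzb]; ext c
    simp only [Finset.mem_sdiff, Finset.mem_union, Finset.mem_insert,
      Finset.mem_singleton]
    constructor
    · rintro ⟨hc1, hc2⟩
      rcases hc1 with (rfl | hc) | (rfl | hc)
      · rfl
      · exact absurd (Or.inr hc) hc2
      · exact absurd (Or.inl rfl) hc2
      · exact absurd (Or.inr hc) hc2
    · rintro rfl
      refine ⟨Or.inl (Or.inl rfl), ?_⟩
      rintro (rfl | hc)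
      · exact hab rfl
      · exact haX hc
  rw [h1, h2]

/-- A covering square remains one after swapping its two middle elements. -/
lemma isCoveringSquare_swap {α : Type*} [PartialOrder α] {x y z w : α}
    (hs : IsCoveringSquare x y z w) : IsCoveringSquare x z y w := by
  obtain ⟨hyz, hglb, hlub, cxy, cxz, cyw, czw⟩ := hs
  exact ⟨hyz.symm, by rwa [Set.pair_comm], by rwa [Set.pair_comm], cxz, cxy, czw, cyw⟩

/-- The only prime intervals inside a covering square are its four edges. -/
lemma square_edge {α : Type*} [PartialOrder α] {x y z w : α}
    (hs : IsCoveringSquare x y z w) {u v : α} (hc : u ⋖ v)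
    (hu : u = x ∨ u = y ∨ u = z ∨ u = w) (hv : v = x ∨ v = y ∨ v = z ∨ v = w) :
    (u = x ∧ v = y) ∨ (u = x ∧ v = z) ∨ (u = y ∧ v = w) ∨ (u = z ∧ v = w) := by
  obtain ⟨hyz, hglb, hlub, cxy, cxz, cyw, czw⟩ := hs
  have hxy := cxy.lt
  have hxz := cxz.lt
  have hyw := cyw.lt
  have hzw := czw.lt
  have hnyz : ¬ y ≤ z := fun h =>
    absurd (hglb.2 (by rintro c (rfl | rfl); exacts [le_rfl, h])) hxy.not_ge
  have hnzy : ¬ z ≤ y := fun h =>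
    absurd (hglb.2 (by rintro c (rfl | rfl); exacts [h, le_rfl])) hxz.not_ge
  have huv := hc.lt
  rcases hu with rfl | rfl | rfl | rfl
  · rcases hv with rfl | rfl | rfl | rfl
    · exact absurd rfl huv.ne
    · exact Or.inl ⟨rfl, rfl⟩
    · exact Or.inr (Or.inl ⟨rfl, rfl⟩)
    · exact absurd hyw (hc.2 hxy)
  · rcases hv with rfl | rfl | rfl | rfl
    · exact absurd huv.le (not_le_of_gt hxy)
    · exact absurd rfl huv.ne
    · exact absurd huv.le hnyz
    · exact Or.inr (Or.inr (Or.inl ⟨rfl, rfl⟩))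
  · rcases hv with rfl | rfl | rfl | rfl
    · exact absurd huv.le (not_le_of_gt hxz)
    · exact absurd huv.le hnzy
    · exact absurd rfl huv.ne
    · exact Or.inr (Or.inr (Or.inr ⟨rfl, rfl⟩))
  · rcases hv with rfl | rfl | rfl | rfl
    · exact absurd huv.le (not_le_of_gt (hxy.trans hyw))
    · exact absurd huv.le (not_le_of_gt hyw)
    · exact absurd huv.le (not_le_of_gt hzw)
    · exact absurd rfl huv.ne

set_option maxHeartbeats 1000000 in
/-- Consecutive prime intervals of the feasible-set lattice add the same element. -/
lemma antimatroid_consecutive_diff {n : ℕ} {F : Set (Finset (Fin n))}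
    (hF : IsAntimatroid F) {p q : F × F} (hp : p.1 ⋖ p.2) (hq : q.1 ⋖ q.2)
    (hcon : Consecutive p q) :
    p.2.val \ p.1.val = q.2.val \ q.1.val := by
  obtain ⟨x, y, z, w, hs, hset⟩ := hcon
  have d1 : y.val \ x.val = w.val \ z.val := antimatroid_square_diff hF hs
  have d2 : z.val \ x.val = w.val \ y.val :=
    antimatroid_square_diff hF (isCoveringSquare_swap hs)
  have hmem : ∀ u : F, u ∈ ({p.1, p.2, q.1, q.2} : Set F) ↔ u ∈ ({x, y, z, w} : Set F) :=
    fun u => by rw [hset]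
  have hmemP1 : p.1 = x ∨ p.1 = y ∨ p.1 = z ∨ p.1 = w := by
    have := (hmem p.1).1 (by simp); simpa using this
  have hmemP2 : p.2 = x ∨ p.2 = y ∨ p.2 = z ∨ p.2 = w := by
    have := (hmem p.2).1 (by simp); simpa using this
  have hmemQ1 : q.1 = x ∨ q.1 = y ∨ q.1 = z ∨ q.1 = w := by
    have := (hmem q.1).1 (by simp); simpa using this
  have hmemQ2 : q.2 = x ∨ q.2 = y ∨ q.2 = z ∨ q.2 = w := by
    have := (hmem q.2).1 (by simp); simpa using this
  have ep := square_edge hs hp hmemP1 hmemP2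
  have eq' := square_edge hs hq hmemQ1 hmemQ2
  have hz : z = p.1 ∨ z = p.2 ∨ z = q.1 ∨ z = q.2 := by
    have := (hmem z).2 (by simp); simpa using this
  have hy : y = p.1 ∨ y = p.2 ∨ y = q.1 ∨ y = q.2 := by
    have := (hmem y).2 (by simp); simpa using this
  have hw : w = p.1 ∨ w = p.2 ∨ w = q.1 ∨ w = q.2 := by
    have := (hmem w).2 (by simp); simpa using this
  have hx : x = p.1 ∨ x = p.2 ∨ x = q.1 ∨ x = q.2 := by
    have := (hmem x).2 (by simp); simpa using this
  have nxy : x ≠ y := hs.2.2.2.1.lt.ne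
  have nyz : y ≠ z := hs.1
  have nxz : x ≠ z := hs.2.2.2.2.1.lt.ne
  have nyw : y ≠ w := hs.2.2.2.2.2.1.lt.ne
  have nzw : z ≠ w := hs.2.2.2.2.2.2.lt.ne
  have nxw : x ≠ w := (hs.2.2.2.1.lt.trans hs.2.2.2.2.2.1.lt).ne
  clear hs hmem hmemP1 hmemP2 hmemQ1 hmemQ2 hset hp hq hF
  rcases ep with ⟨h1, h2⟩ | ⟨h1, h2⟩ | ⟨h1, h2⟩ | ⟨h1, h2⟩ <;>
    rcases eq' with ⟨h3, h4⟩ | ⟨h3, h4⟩ | ⟨h3, h4⟩ | ⟨h3, h4⟩ <;>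
    rw [h1, h2, h3, h4] at hx hz hy hw ⊢ <;>
    first
      | exact d1
      | exact d2
      | exact d1.symm
      | exact d2.symm
      | tauto

/-- Let `𝔉` be an antimatroid on `{1,…,n}`, regarded as a lattice under
set inclusion. For every trajectory `T` of `𝔉` (given by a representative prime interval
`p`) there is an element `x_T` such that `X = Y \ {x_T}` holds for every prime interval
`[X, Y]` belonging to `T`. -/
theorem statement15 {n : ℕ} (F : Set (Finset (Fin n))) (hF : IsAntimatroid F)
    (p : PrimeInterval F) :
    ∃ x : Fin n, ∀ q : PrimeInterval F, SameTrajectory p q →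
      q.val.1.val = q.val.2.val.erase x := by
  obtain ⟨a, haP2, haP1, hins⟩ := antimatroid_cover_insert hF p.prop
  refine ⟨a, ?_⟩
  have key : ∀ q : PrimeInterval F, SameTrajectory p q →
      q.val.2.val \ q.val.1.val = {a} := by
    intro q hst
    induction hst with
    | refl =>
        rw [hins]
        ext c
        simp only [Finset.mem_sdiff, Finset.mem_insert, Finset.mem_singleton]
        constructor
        · rintro ⟨rfl | hc, h⟩
          · rfl
          · exact absurd hc h
        · rintro rfl; exact ⟨Or.inl rfl, haP1⟩
    | @tail b c hbc hcon ih =>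
        have hd := antimatroid_consecutive_diff hF b.prop c.prop hcon
        rw [← hd]; exact ih
  intro q hst
  have hdiff := key q hst
  have hsub : q.val.1.val ⊆ q.val.2.val := q.prop.lt.1
  rw [Finset.erase_eq, ← hdiff, sdiff_sdiff_eq_self hsub]
end

section
/- A finite lattice L is join-distributive if and only if L is semimodular and meet-semidistributive. -/
/-- A lattice is meet-semidistributive if `x ⊓ y = x ⊓ z` implies `x ⊓ (y ⊔ z) = x ⊓ y`. -/
def MeetSemidistributive (α : Type*) [Lattice α] : Prop :=
  ∀ x y z : α, x ⊓ y = x ⊓ z → x ⊓ (y ⊔ z) = x ⊓ y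

section

variable {L : Type*} [Lattice L]

lemma exists_isLUB_of_nonempty [Finite L] {s : Set L} (hs : s.Nonempty) : ∃ u, IsLUB s u :=
  ⟨_, by simpa using (Set.toFinite s).toFinset.isLUB_sup' (by simpa using hs)⟩

lemma CovBy.inf_eq_of_not_le {m q y : L} (hq : m ⋖ q) (hmy : m ≤ y) (hqy : ¬q ≤ y) :
    q ⊓ y = m :=
  (hq.wcovBy.eq_or_eq (le_inf hq.le hmy) inf_le_left).resolve_right
    fun h => hqy (inf_eq_left.mp h)

lemma Semimodular.covBy_sup_of_covBy (hsm : Semimodular L) {m p t : L} (hp : m ⋖ p)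
    (hmt : m ≤ t) (hpt : ¬p ≤ t) : t ⋖ t ⊔ p :=
  hsm t p (by rw [inf_comm, hp.inf_eq_of_not_le hmt hpt]; exact hp)

namespace JoinDistributive

variable [Finite L]

lemma covBy_sup_of_covBy (hjd : JoinDistributive L) {m q r : L} (hq : m ⋖ q) (hr : m ⋖ r)
    (hrq : ¬r ≤ q) : q ⋖ q ⊔ r := by
  obtain ⟨u, hu⟩ := exists_isLUB_of_nonempty (s := {y | m ⋖ y}) ⟨q, hq⟩
  refine ⟨left_lt_sup.mpr hrq, fun t hqt htqr => ?_⟩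
  have hdistrib := hjd m u hq.lt.not_isMax hu t ⟨hq.le.trans hqt.le, htqr.le.trans
    (sup_le (hu.1 hq) (hu.1 hr))⟩ q ⟨hq.le, hu.1 hq⟩ r ⟨hr.le, hu.1 hr⟩
  rw [inf_eq_left.mpr htqr.le, inf_eq_right.mpr hqt.le] at hdistrib
  by_cases hrt : r ≤ t
  · exact htqr.not_ge (sup_le hqt.le hrt)
  · rw [inf_comm, hr.inf_eq_of_not_le (hq.le.trans hqt.le) hrt, sup_eq_left.mpr hq.le]
      at hdistrib
    exact hqt.ne' hdistrib

theorem semimodular (hjd : JoinDistributive L) : Semimodular L := by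
  suffices h : ∀ m a b : L, a ⊓ b = m → m ⋖ b → a ⋖ a ⊔ b from
    fun a b hab => h _ a b rfl hab
  intro m
  induction m using WellFoundedGT.induction with
  | ind m ih =>
  intro a b hm hmb
  have hba : ¬b ≤ a := fun h => hmb.ne (by rw [← hm, inf_eq_right.mpr h])
  by_cases hab : a ≤ b
  · rwa [sup_eq_right.mpr hab, ← inf_eq_left.mpr hab, hm]
  obtain ⟨a', hma', ha'a⟩ := (hm ▸ inf_lt_left.mpr hab).exists_covby_le
  have ha'b : a' ⋖ a' ⊔ b := hjd.covBy_sup_of_covBy hma' hmb fun h => hba (h.trans ha'a)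
  have hinf : a ⊓ (a' ⊔ b) = a' := by
    rw [inf_comm]
    exact ha'b.inf_eq_of_not_le ha'a fun h => hba (le_sup_right.trans h)
  simpa [← sup_assoc, sup_eq_left.mpr ha'a] using
    ih a' hma'.lt a (a' ⊔ b) hinf (hinf ▸ ha'b)

lemma not_le_sup_covBy (hjd : JoinDistributive L) {m p a b : L} (hp : m ⋖ p) (ha : m ⋖ a)
    (hb : m ⋖ b) (hpa : ¬p ≤ a) (hpb : ¬p ≤ b) : ¬p ≤ a ⊔ b := by
  obtain ⟨u, hu⟩ := exists_isLUB_of_nonempty (s := {y | m ⋖ y}) ⟨p, hp⟩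
  have hdistrib := hjd m u hp.lt.not_isMax hu p ⟨hp.le, hu.1 hp⟩ a ⟨ha.le, hu.1 ha⟩
    b ⟨hb.le, hu.1 hb⟩
  rw [hp.inf_eq_of_not_le ha.le hpa, hp.inf_eq_of_not_le hb.le hpb, sup_idem] at hdistrib
  exact fun h => hp.ne' (by rwa [inf_eq_left.mpr h] at hdistrib)

theorem not_le_sup_of_covBy (hjd : JoinDistributive L) {m p y z : L} (hp : m ⋖ p)
    (hy : m ≤ y) (hz : m ≤ z) (hpy : ¬p ≤ y) (hpz : ¬p ≤ z) : ¬p ≤ y ⊔ z := by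
  induction m using WellFoundedGT.induction generalizing p y z with
  | ind m ih =>
  have hsm := hjd.semimodular
  rcases hy.eq_or_lt with rfl | hmy
  · rwa [sup_eq_right.mpr hz]
  rcases hz.eq_or_lt with rfl | hmz
  · rwa [sup_eq_left.mpr hy]
  obtain ⟨y₁, hy₁, hy₁y⟩ := hmy.exists_covby_le
  obtain ⟨z₁, hz₁, hz₁z⟩ := hmz.exists_covby_le
  have hpy₁ : ¬p ≤ y₁ := fun h => hpy (h.trans hy₁y)
  have hpz₁ : ¬p ≤ z₁ := fun h => hpz (h.trans hz₁z)
  have hy₁z₁ : ¬p ≤ y₁ ⊔ z₁ := hjd.not_le_sup_covBy hp hy₁ hz₁ hpy₁ hpz₁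
  -- Pass to the interval above `z₁`, where `p` is replaced by the cover `z₁ ⊔ p` of `z₁`.
  have hy₁z : ¬p ≤ y₁ ⊔ z := by
    have := ih z₁ hz₁.lt (hsm.covBy_sup_of_covBy hp hz₁.le hpz₁) le_sup_right hz₁z
      (fun h => hy₁z₁ (le_sup_right.trans h)) (fun h => hpz (le_sup_right.trans h))
    rw [sup_assoc, sup_eq_right.mpr hz₁z] at this
    exact fun h => this (sup_le (hz₁z.trans le_sup_right) h)
  have := ih y₁ hy₁.lt (hsm.covBy_sup_of_covBy hp hy₁.le hpy₁) hy₁y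
    le_sup_left (fun h => hpy (le_sup_right.trans h))
    (fun h => hy₁z (le_sup_right.trans h))
  rw [← sup_assoc, sup_eq_left.mpr hy₁y] at this
  exact fun h => this (sup_le (hy₁y.trans le_sup_left) h)

theorem meetSemidistributive (hjd : JoinDistributive L) : MeetSemidistributive L := by
  intro x y z hyz
  by_contra hne
  have hlt : x ⊓ y < x ⊓ (y ⊔ z) :=
    lt_of_le_of_ne (inf_le_inf_left x le_sup_left) (Ne.symm hne)
  obtain ⟨p, hp, hpx⟩ := hlt.exists_covby_le
  have hpy : ¬p ≤ y := fun h => hp.ne' (le_antisymm (le_inf (hpx.trans inf_le_left) h) hp.le)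
  have hpz : ¬p ≤ z := fun h =>
    hp.ne' (le_antisymm (hyz ▸ le_inf (hpx.trans inf_le_left) h) hp.le)
  exact hjd.not_le_sup_of_covBy hp inf_le_right (hyz ▸ inf_le_right) hpy hpz
    (hpx.trans inf_le_right)

end JoinDistributive

namespace MeetSemidistributive

lemma le_or_le_of_covBy_le_sup (hsd : MeetSemidistributive L) {x q b c : L} (hq : x ⋖ q)
    (hb : x ≤ b) (hc : x ≤ c) (h : q ≤ b ⊔ c) : q ≤ b ∨ q ≤ c := by
  by_contra! hqbc
  have hqb := hq.inf_eq_of_not_le hb hqbc.1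
  have := hsd q b c (hqb.trans (hq.inf_eq_of_not_le hc hqbc.2).symm)
  rw [inf_eq_left.mpr h, hqb] at this
  exact hq.ne' this

lemma exists_isGreatest_inf_eq [Finite L] (hsd : MeetSemidistributive L) (a w : L) :
    ∃ v, IsGreatest {y | a ⊓ y = a ⊓ w} v := by
  have hfin := Set.toFinite {y | a ⊓ y = a ⊓ w}
  have hs : hfin.toFinset.Nonempty := ⟨w, by simp⟩
  refine ⟨hfin.toFinset.sup' hs id, ?_,
    fun y hy => hfin.toFinset.le_sup' id (by simpa using hy)⟩
  refine Finset.sup'_induction hs id (p := fun y => a ⊓ y = a ⊓ w) ?_ (by simp)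
  intro y₁ hy₁ y₂ hy₂
  rw [hsd a y₁ y₂ (hy₁.trans hy₂.symm), hy₁]

end MeetSemidistributive

lemma le_of_forall_covBy_le [Finite L] (hsm : Semimodular L) (hsd : MeetSemidistributive L)
    {x u a w : L} (hu : IsLUB {y | x ⋖ y} u) (hxa : x ≤ a) (hau : a ≤ u) (hxw : x ≤ w)
    (h : ∀ q, x ⋖ q → q ≤ a → q ≤ w) : a ≤ w := by
  set w₀ := a ⊓ w
  have haw₀ : a ⊓ w₀ = w₀ := inf_eq_right.mpr inf_le_left
  obtain ⟨v, hv, hv_max⟩ := hsd.exists_isGreatest_inf_eq a w₀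
  have hcov : ∀ q, x ⋖ q → q ≤ v := by
    intro q hq
    by_cases hqw₀ : q ≤ w₀
    · exact hqw₀.trans (hv_max rfl)
    have hw₀q := hsm.covBy_sup_of_covBy hq (le_inf hxa hxw) hqw₀
    have hinf : a ⊓ (w₀ ⊔ q) = a ⊓ w₀ := by
      rw [haw₀, inf_comm]
      exact hw₀q.inf_eq_of_not_le inf_le_left fun hle =>
        hqw₀ (le_inf (le_sup_right.trans hle) (h q hq (le_sup_right.trans hle)))
    exact le_sup_right.trans (hv_max hinf)
  calc a = a ⊓ v := (inf_eq_left.mpr (hau.trans (hu.2 hcov))).symm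
    _ = w₀ := hv.trans haw₀
    _ ≤ w := inf_le_right

theorem joinDistributive_of_semimodular_of_meetSemidistributive [Finite L]
    (hsm : Semimodular L) (hsd : MeetSemidistributive L) : JoinDistributive L := by
  intro x u _ hu a ha b hb c hc
  refine le_antisymm (le_of_forall_covBy_le hsm hsd hu (le_inf ha.1 (hb.1.trans le_sup_left))
    (inf_le_left.trans ha.2) ((le_inf ha.1 hb.1).trans le_sup_left) fun q hq hqle => ?_) le_inf_sup
  have hqa : q ≤ a := hqle.trans inf_le_left
  rcases hsd.le_or_le_of_covBy_le_sup hq hb.1 hc.1 (hqle.trans inf_le_right) with hqb | hqc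
  · exact (le_inf hqa hqb).trans le_sup_left
  · exact (le_inf hqa hqc).trans le_sup_right

end

/-- A finite lattice is join-distributive if and only if it is
semimodular and meet-semidistributive. -/
theorem statement16 (L : Type*) [Lattice L] [Fintype L] :
    JoinDistributive L ↔ Semimodular L ∧ MeetSemidistributive L :=
  ⟨fun h => ⟨h.semimodular, h.meetSemidistributive⟩,
    fun h => joinDistributive_of_semimodular_of_meetSemidistributive h.1 h.2⟩
end

section
/- Let n ≥ 1, k ≥ 2 and let π = (π_{12},…,π_{1k}) be a (k−1)-tuple of permutations of {1,…,n}, with π_{11} = id. The set of meet-irreducible elements of the π-coordinatized lattice C(π) is exactly { (π_{11}(i) − 1, π_{12}(i) − 1, …, π_{1k}(i) − 1) : i ∈ {1,…,n} }. -/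
/-!
Eligibility of `x` says exactly that whenever `x j = π j i` for some coordinate `j`, the tuple
`x` lies below `permTuple π i = (π j i)_j`. Hence eligible tuples are closed under componentwise
`min`, and a non-top `x` (all of whose coordinates are then `< n`) is the meet of the `k` tuples
`permTuple π i` it touches, one for each coordinate, so a meet-irreducible `x` is one of them.
Conversely, if `permTuple π i = a ⊓ b` then `a` or `b` agrees with it in some coordinate, hence
lies below it and equals it.
-/

variable {n k : ℕ} {π : Fin k → Equiv.Perm (Fin n)}

def permTuple (π : Fin k → Equiv.Perm (Fin n)) (i : Fin n) : Fin k → ℕ :=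
  fun j => (π j i : ℕ)

theorem eligible_iff_le_permTuple {x : Fin k → ℕ} :
    Eligible π x ↔ (∀ j, x j ≤ n) ∧ ∀ j i, x j = π j i → x ≤ permTuple π i := by
  refine and_congr_right fun _ => ⟨fun hx j i hj j' => ?_, fun hx j j' hj => ?_⟩
  · have hfin : (⟨x j, hj ▸ (π j i).isLt⟩ : Fin n) = π j i := Fin.ext hj
    simpa [hfin, permTuple] using hx j j' (hj ▸ (π j i).isLt)
  · have hle := hx j ((π j)⁻¹ ⟨x j, hj⟩) (by simp) j'
    exact Nat.succ_le_succ hle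

namespace Eligible

theorem le_permTuple {x : Fin k → ℕ} (hx : Eligible π x) {j : Fin k} {i : Fin n}
    (hj : x j = π j i) : x ≤ permTuple π i :=
  (eligible_iff_le_permTuple.mp hx).2 j i hj

theorem exists_le_permTuple {x : Fin k → ℕ} (hx : Eligible π x) {j : Fin k} (hj : x j < n) :
    ∃ i, x j = π j i ∧ x ≤ permTuple π i :=
  ⟨(π j)⁻¹ ⟨x j, hj⟩, by simp, hx.le_permTuple (j := j) (by simp)⟩

theorem inf {x y : Fin k → ℕ} (hx : Eligible π x) (hy : Eligible π y) :
    Eligible π (x ⊓ y) := by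
  refine eligible_iff_le_permTuple.mpr
    ⟨fun j => (min_le_left _ _).trans (hx.1 j), fun j i hj => ?_⟩
  rcases min_choice (x j) (y j) with h | h
  · exact inf_le_left.trans (hx.le_permTuple (h.symm.trans hj))
  · exact inf_le_right.trans (hy.le_permTuple (h.symm.trans hj))

end Eligible

theorem eligible_permTuple (i : Fin n) : Eligible π (permTuple π i) := by
  refine eligible_iff_le_permTuple.mpr ⟨fun j => (π j i).isLt.le, fun j i' hj => ?_⟩
  obtain rfl : i = i' := (π j).injective (Fin.ext hj)
  exact le_rfl

theorem eligible_const : Eligible π (fun _ => n) :=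
  ⟨fun _ => le_rfl, fun _ _ h => absurd h (lt_irrefl n)⟩

abbrev CoordLattice (π : Fin k → Equiv.Perm (Fin n)) := {x : Fin k → ℕ // Eligible π x}

instance : SemilatticeInf (CoordLattice π) :=
  Subtype.semilatticeInf fun _ _ => Eligible.inf

instance : OrderTop (CoordLattice π) where
  top := ⟨fun _ => n, eligible_const⟩
  le_top x := x.2.1

theorem isGLB_pair_iff_inf_eq {α : Type*} [SemilatticeInf α] {a b m : α} :
    IsGLB {a, b} m ↔ a ⊓ b = m :=
  ⟨isGLB_pair.unique, fun h => h ▸ isGLB_pair⟩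

theorem infIrred_iff_coordLattice {m : CoordLattice π} :
    InfIrred m ↔
      m.val ≠ (fun _ => n) ∧ ∀ a b : CoordLattice π, IsGLB {a, b} m → m = a ∨ m = b := by
  simp only [InfIrred, isMax_iff_eq_top, isGLB_pair_iff_inf_eq]
  exact and_congr (not_congr Subtype.ext_iff)
    (forall₂_congr fun _ _ => imp_congr_right fun _ => or_congr eq_comm eq_comm)

theorem infIrred_permTuple (hk : 0 < k) (i : Fin n) :
    InfIrred (⟨permTuple π i, eligible_permTuple i⟩ : CoordLattice π) := by
  set j₀ : Fin k := ⟨0, hk⟩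
  refine ⟨fun hmax => ?_, fun a b hab => ?_⟩
  · have htop := congrFun (congrArg Subtype.val (isMax_iff_eq_top.mp hmax)) j₀
    exact (π j₀ i).isLt.ne htop
  · have hj₀ : min (a.val j₀) (b.val j₀) = π j₀ i :=
      congrFun (congrArg Subtype.val hab) j₀
    rcases min_choice (a.val j₀) (b.val j₀) with h | h
    · exact .inl (le_antisymm (a.2.le_permTuple (h.symm.trans hj₀)) (hab ▸ inf_le_left))
    · exact .inr (le_antisymm (b.2.le_permTuple (h.symm.trans hj₀)) (hab ▸ inf_le_right))

theorem InfIrred.exists_eq_permTuple {m : CoordLattice π} (hm : InfIrred m) :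
    ∃ i, m.val = permTuple π i := by
  obtain ⟨j₀, hj₀⟩ : ∃ j, m.val j < n := by
    by_contra! h
    exact hm.ne_top (Subtype.ext (funext fun j => le_antisymm (m.2.1 j) (h j)))
  have hlt : ∀ j, m.val j < n := fun j => by
    obtain ⟨i, -, hle⟩ := m.2.exists_le_permTuple hj₀
    exact (hle j).trans_lt (π j i).isLt
  choose f hf using fun j => m.2.exists_le_permTuple (hlt j)
  let p : Fin k → CoordLattice π := fun j => ⟨permTuple π (f j), eligible_permTuple (f j)⟩
  have hinf : Finset.univ.inf p = m := by
    refine le_antisymm (fun j => ?_) (Finset.le_inf fun j _ => (hf j).2)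
    exact ((Finset.inf_le (Finset.mem_univ j) : Finset.univ.inf p ≤ p j) j).trans (hf j).1.ge
  obtain ⟨j, -, hj⟩ := hm.finset_inf_eq hinf
  exact ⟨f j, (congrArg Subtype.val hj).symm⟩

/-- Let `n ≥ 1`, `k ≥ 2` and let `π = (π_{12},…,π_{1k})` be a
`(k-1)`-tuple of permutations of `{1,…,n}` (encoded with `π 0 = id` playing the role of
`π_{11}`). The meet-irreducible elements of the `π`-coordinatized lattice `C(π)` (the
non-top elements `m` such that whenever `m` is the greatest lower bound, i.e. the meet, of
two elements, it equals one of them) are exactly the tuples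
`(π_{11}(i) - 1, …, π_{1k}(i) - 1)` for `i ∈ {1,…,n}`; in the `Fin n` encoding, the tuples
`j ↦ (π j) i` for `i : Fin n`. -/
theorem statement17 (n k : ℕ) (hk : 2 ≤ k)
    (π : Fin k → Equiv.Perm (Fin n)) :
    {m : {x : Fin k → ℕ // Eligible π x} | m.val ≠ (fun _ => n) ∧
        ∀ a b : {x : Fin k → ℕ // Eligible π x}, IsGLB {a, b} m → m = a ∨ m = b} =
    {m : {x : Fin k → ℕ // Eligible π x} |
        ∃ i : Fin n, m.val = fun j => ((π j) i : ℕ)} := by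
  ext m
  rw [Set.mem_ofPred_eq, Set.mem_ofPred_eq, ← infIrred_iff_coordLattice]
  refine ⟨InfIrred.exists_eq_permTuple, fun ⟨i, hi⟩ => ?_⟩
  obtain rfl : m = ⟨permTuple π i, eligible_permTuple i⟩ := Subtype.ext hi
  exact infIrred_permTuple (by omega) i
end
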